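/- arXiv:1305.5900 — 8 statements merged into one kernel-verified Lean document; each statement's English description precedes it below -/
import Mathlib

section
/- Let G be a locally compact, Hausdorff topological groupoid whose range map r and source map s are open. Then the composition map G^{(2)} → G, (α,β) ↦ αβ (where G^{(2)} carries the subspace topology from G × G), is an open map. In particular, for any open subsets A, B of G the set AB = {αβ : α ∈ A, β ∈ B, (α,β) ∈ G^{(2)}} is open in G. -/
/-- A groupoid in the sense of Renault: a set `G` together with a set of composable
pairs (encoded by the predicate `Comp`), a (partially meaningful) composition `mul`
and an involution `inv`.  The field `comp_iff` records the standard characterisation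
of composability: `(a, b)` is composable iff `s(a) = r(b)`, where `s(a) = a⁻¹a` and
`r(a) = aa⁻¹`. -/
structure GroupoidStr (G : Type*) where
  mul : G → G → G
  inv : G → G
  Comp : G → G → Prop
  comp_mul_left : ∀ {a b c}, Comp a b → Comp b c → Comp (mul a b) c
  comp_mul_right : ∀ {a b c}, Comp a b → Comp b c → Comp a (mul b c)
  mul_assoc : ∀ {a b c}, Comp a b → Comp b c → mul (mul a b) c = mul a (mul b c)
  comp_inv : ∀ a, Comp (inv a) a
  inv_mul_cancel : ∀ {a b}, Comp a b → mul (inv a) (mul a b) = b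
  mul_inv_cancel : ∀ {a b}, Comp a b → mul (mul a b) (inv b) = a
  inv_inv : ∀ a, inv (inv a) = a
  comp_iff : ∀ a b, Comp a b ↔ mul (inv a) a = mul b (inv b)

namespace GroupoidStr

variable {G : Type*}

/-- The source map `s(a) = a⁻¹ a`. -/
def src (S : GroupoidStr G) (a : G) : G := S.mul (S.inv a) a

/-- The range map `r(a) = a a⁻¹`. -/
def rng (S : GroupoidStr G) (a : G) : G := S.mul a (S.inv a)

/-- The unit space `G⁽⁰⁾`, the common image of the range and source maps. -/
def unitSpace (S : GroupoidStr G) : Set G := Set.range S.rng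

end GroupoidStr

section Aux

variable {G : Type*}

lemma GroupoidStr.comp_self_inv (S : GroupoidStr G) (a : G) : S.Comp a (S.inv a) := by
  have h := S.comp_inv (S.inv a)
  rwa [S.inv_inv] at h

lemma GroupoidStr.comp_inv_left_iff (S : GroupoidStr G) (a b : G) :
    S.Comp (S.inv a) b ↔ S.rng a = S.rng b := by
  unfold GroupoidStr.rng
  rw [S.comp_iff, S.inv_inv]

end Aux

/-- Let `G` be a locally compact Hausdorff topological groupoid whose range and source
maps are open.  Then the composition map `G⁽²⁾ → G`, `(α, β) ↦ αβ` (with `G⁽²⁾` carrying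
the subspace topology from `G × G`), is open; in particular, for open subsets `A, B` of
`G` the set `AB = {αβ : α ∈ A, β ∈ B, (α, β) ∈ G⁽²⁾}` is open. -/
theorem stmt2 {G : Type*} [TopologicalSpace G] [LocallyCompactSpace G] [T2Space G]
    (S : GroupoidStr G)
    (contMul : Continuous fun p : {q : G × G // S.Comp q.1 q.2} => S.mul p.1.1 p.1.2)
    (contInv : Continuous S.inv)
    (hr : IsOpenMap S.rng) (hs : IsOpenMap S.src) :
    IsOpenMap (fun p : {q : G × G // S.Comp q.1 q.2} => S.mul p.1.1 p.1.2) ∧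
    ∀ A B : Set G, IsOpen A → IsOpen B →
      IsOpen {c : G | ∃ a ∈ A, ∃ b ∈ B, S.Comp a b ∧ S.mul a b = c} := by
  set m : {q : G × G // S.Comp q.1 q.2} → G := fun p => S.mul p.1.1 p.1.2 with hm
  -- the range map is continuous
  have contRng : Continuous S.rng := by
    have : S.rng = m ∘ (fun a : G => (⟨(a, S.inv a), S.comp_self_inv a⟩ :
        {q : G × G // S.Comp q.1 q.2})) := rfl
    rw [this]
    exact contMul.comp (Continuous.subtype_mk (continuous_id.prodMk contInv) _)
  -- the "division" map ψ(α, γ) = (α, α⁻¹γ) from the fiber product to G⁽²⁾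
  have hcompψ : ∀ q : {q : G × G // S.Comp (S.inv q.1) q.2},
      S.Comp q.1.1 (S.mul (S.inv q.1.1) q.1.2) := by
    intro q
    exact S.comp_mul_right (S.comp_self_inv q.1.1) q.2
  set ψ : {q : G × G // S.Comp (S.inv q.1) q.2} → {q : G × G // S.Comp q.1 q.2} :=
    fun q => ⟨(q.1.1, S.mul (S.inv q.1.1) q.1.2), hcompψ q⟩ with hψ
  have contψ : Continuous ψ := by
    apply Continuous.subtype_mk
    apply Continuous.prodMk
    · exact continuous_fst.comp continuous_subtype_val
    · have : (fun q : {q : G × G // S.Comp (S.inv q.1) q.2} =>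
          S.mul (S.inv q.1.1) q.1.2) =
          m ∘ (fun q : {q : G × G // S.Comp (S.inv q.1) q.2} =>
            (⟨(S.inv q.1.1, q.1.2), q.2⟩ : {q : G × G // S.Comp q.1 q.2})) := rfl
      rw [this]
      refine contMul.comp (Continuous.subtype_mk ?_ _)
      exact (contInv.comp (continuous_fst.comp continuous_subtype_val)).prodMk
        (continuous_snd.comp continuous_subtype_val)
  have hmψ : ∀ q, m (ψ q) = q.1.2 := by
    intro q
    have := S.inv_mul_cancel (a := S.inv q.1.1) (b := q.1.2) q.2
    rwa [S.inv_inv] at this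
  -- the key openness statement
  have key : IsOpenMap m := by
    intro W hW
    rw [isOpen_iff_forall_mem_open]
    rintro γ ⟨p, hpW, rfl⟩
    obtain ⟨⟨α, β⟩, hαβ⟩ := p
    -- γ₀ = m p = S.mul α β
    have hαγ : S.Comp (S.inv α) (S.mul α β) := S.comp_mul_right (S.comp_inv α) hαβ
    have hrαγ : S.rng α = S.rng (S.mul α β) := (S.comp_inv_left_iff α _).mp hαγ
    have hq : (⟨(α, S.mul α β), hαγ⟩ : {q : G × G // S.Comp (S.inv q.1) q.2}) ∈ ψ ⁻¹' W := by
      show ψ _ ∈ W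
      have : ψ ⟨(α, S.mul α β), hαγ⟩ = ⟨(α, β), hαβ⟩ := by
        apply Subtype.ext
        simp only [ψ]
        exact Prod.ext rfl (S.inv_mul_cancel hαβ)
      rwa [this]
    have hU : IsOpen (ψ ⁻¹' W) := hW.preimage contψ
    obtain ⟨O, hO, hOeq⟩ := isOpen_induced_iff.mp hU
    have hOmem : O ∈ nhds ((α, S.mul α β) : G × G) := hO.mem_nhds (by
      rw [← hOeq] at hq; exact hq)
    obtain ⟨A, B, hA, hαA, hB, hγB, hABO⟩ := mem_nhds_prod_iff'.mp hOmem
    refine ⟨B ∩ S.rng ⁻¹' (S.rng '' A), ?_, ⟨hB.inter ((hr A hA).preimage contRng),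
      ⟨hγB, ⟨α, hαA, hrαγ⟩⟩⟩⟩
    rintro γ ⟨hγB', ⟨α', hα'A, hrα'γ⟩⟩
    have hcomp : S.Comp (S.inv α') γ := (S.comp_inv_left_iff α' γ).mpr hrα'γ
    have hmem : (⟨(α', γ), hcomp⟩ : {q : G × G // S.Comp (S.inv q.1) q.2}) ∈ ψ ⁻¹' W := by
      rw [← hOeq]
      exact hABO ⟨hα'A, hγB'⟩
    exact ⟨ψ ⟨(α', γ), hcomp⟩, hmem, hmψ _⟩
  refine ⟨key, fun A B hA hB => ?_⟩
  have : {c : G | ∃ a ∈ A, ∃ b ∈ B, S.Comp a b ∧ S.mul a b = c} =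
      m '' (Subtype.val ⁻¹' (A ×ˢ B)) := by
    ext c
    constructor
    · rintro ⟨a, ha, b, hb, hab, rfl⟩
      exact ⟨⟨(a, b), hab⟩, ⟨ha, hb⟩, rfl⟩
    · rintro ⟨⟨⟨a, b⟩, hab⟩, ⟨ha, hb⟩, rfl⟩
      exact ⟨a, ha, b, hb, hab, rfl⟩
  rw [this]
  exact key _ ((hA.prod hB).preimage continuous_subtype_val)
end

section
/- Let G be a second countable, locally compact, Hausdorff topological groupoid. Then the following are equivalent: (a) the source map s : G → G is a local homeomorphism; (b) the range map r : G → G is a local homeomorphism; (c) G is r-discrete and the composition map G^{(2)} → G (with G^{(2)} carrying the subspace topology from G × G) is a local homeomorphism. -/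
open Topology

theorem IsLocalHomeomorph.pullback_snd {X Y Z : Type*} [TopologicalSpace X] [TopologicalSpace Y]
    [TopologicalSpace Z] {f : X → Y} {g : Z → Y} (hf : IsLocalHomeomorph f) (hg : Continuous g) :
    IsLocalHomeomorph (Function.Pullback.snd : f.Pullback g → Z) := by
  classical
  intro p
  obtain ⟨e, hpe, rfl⟩ := hf p.fst
  have comm (q : Function.Pullback e g) : e q.fst = g q.snd := q.2
  have lift_comm (z : Z) (hz : g z ∈ e.target) : e (e.symm (g z)) = g z := e.right_inv hz
  refine ⟨{
    toFun := Function.Pullback.snd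
    invFun := fun z => if hz : g z ∈ e.target then ⟨(e.symm (g z), z), lift_comm z hz⟩ else p
    source := {q | q.fst ∈ e.source}
    target := g ⁻¹' e.target
    map_source' := fun q hq => by
      rw [Set.mem_preimage, ← comm q]; exact e.map_source hq
    map_target' := fun z (hz : g z ∈ e.target) => by
      rw [dif_pos hz]; exact e.map_target hz
    left_inv' := fun q hq => by
      have hq' : g q.snd ∈ e.target := by rw [← comm q]; exact e.map_source hq
      rw [dif_pos hq']
      refine Subtype.ext (Prod.ext ?_ rfl)
      change e.symm (g q.snd) = q.fst
      rw [← comm q]; exact e.left_inv hq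
    right_inv' := fun z (hz : g z ∈ e.target) => by rw [dif_pos hz]; rfl
    open_source := e.open_source.preimage (continuous_fst.comp continuous_subtype_val)
    open_target := e.open_target.preimage hg
    continuousOn_toFun := (continuous_snd.comp continuous_subtype_val).continuousOn
    continuousOn_invFun := by
      rw [continuousOn_iff_continuous_domRestrict]
      have hlift : Continuous fun z : g ⁻¹' e.target => e.symm (g z) :=
        e.continuousOn_symm.comp_continuous (hg.comp continuous_subtype_val) fun z => z.2
      convert (hlift.prodMk continuous_subtype_val).subtype_mk
        (p := fun x : X × Z => e x.1 = g x.2) (fun z => lift_comm z z.2) using 1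
      exact funext fun z => dif_pos z.2 }, hpe, rfl⟩

namespace GroupoidStr

variable {G : Type*} (S : GroupoidStr G)

abbrev ComposablePairs : Type _ := {q : G × G // S.Comp q.1 q.2}

def mulPair (p : S.ComposablePairs) : G := S.mul p.1.1 p.1.2

def pairInvSelf (a : G) : S.ComposablePairs := ⟨(S.inv a, a), S.comp_inv a⟩

lemma rng_inv (a : G) : S.rng (S.inv a) = S.src a := by
  simp only [rng, src, S.inv_inv]

lemma src_inv (a : G) : S.src (S.inv a) = S.rng a := by
  simp only [rng, src, S.inv_inv]

lemma comp_iff_src_eq_rng (a b : G) : S.Comp a b ↔ S.src a = S.rng b := S.comp_iff a b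

lemma comp_inv_self (a : G) : S.Comp a (S.inv a) := by
  rw [comp_iff_src_eq_rng, rng_inv]

lemma comp_inv_left_iff_s3 {a b : G} : S.Comp (S.inv a) b ↔ S.rng a = S.rng b := by
  rw [comp_iff_src_eq_rng, src_inv]

lemma comp_inv_inv {a b : G} (h : S.Comp a b) : S.Comp (S.inv b) (S.inv a) := by
  rw [comp_iff_src_eq_rng, src_inv, rng_inv]
  exact ((S.comp_iff_src_eq_rng a b).mp h).symm

lemma mul_src (a : G) : S.mul a (S.src a) = a := by
  simpa only [src, S.inv_inv] using S.inv_mul_cancel (S.comp_inv a)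

lemma rng_mul_self (a : G) : S.mul (S.rng a) a = a := by
  simpa only [rng, S.inv_inv] using S.mul_inv_cancel (S.comp_inv (S.inv a))

lemma inv_mul {a b : G} (h : S.Comp a b) : S.inv (S.mul a b) = S.mul (S.inv b) (S.inv a) := by
  have hab_b : S.Comp (S.mul a b) (S.inv b) := S.comp_mul_left h (S.comp_inv_self b)
  have hcancel : S.mul (S.inv (S.mul a b)) a = S.inv b := by
    simpa only [S.mul_inv_cancel h] using S.inv_mul_cancel hab_b
  have hcomp : S.Comp (S.inv (S.mul a b)) a := by
    simpa only [S.mul_inv_cancel h] using S.comp_mul_right (S.comp_inv (S.mul a b)) hab_b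
  simpa only [hcancel] using (S.mul_inv_cancel hcomp).symm

lemma rng_mul {a b : G} (h : S.Comp a b) : S.rng (S.mul a b) = S.rng a := by
  have hab_b : S.Comp (S.mul a b) (S.inv b) := S.comp_mul_left h (S.comp_inv_self b)
  rw [rng, S.inv_mul h, ← S.mul_assoc hab_b (S.comp_inv_inv h), S.mul_inv_cancel h, rng]

lemma rng_of_mem_unitSpace {u : G} (hu : u ∈ S.unitSpace) : S.rng u = u := by
  obtain ⟨a, rfl⟩ := hu
  exact S.rng_mul (S.comp_inv_self a)

lemma src_mem_unitSpace (a : G) : S.src a ∈ S.unitSpace := ⟨S.inv a, S.rng_inv a⟩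

lemma eq_inv_of_mul_mem_unitSpace {a b : G} (h : S.Comp a b) (hu : S.mul a b ∈ S.unitSpace) :
    b = S.inv a := by
  have hab : S.mul a b = S.rng a := by rw [← S.rng_mul h, S.rng_of_mem_unitSpace hu]
  simpa only [hab, ← S.src_inv, S.mul_src] using (S.inv_mul_cancel h).symm

lemma comp_inv_mul {a b : G} (h : S.rng a = S.rng b) : S.Comp a (S.mul (S.inv a) b) :=
  S.comp_mul_right (S.comp_inv_self a) (S.comp_inv_left_iff_s3.mpr h)

lemma mul_inv_mul {a b : G} (h : S.rng a = S.rng b) : S.mul a (S.mul (S.inv a) b) = b := by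
  rw [← S.mul_assoc (S.comp_inv_self a) (S.comp_inv_left_iff_s3.mpr h)]
  change S.mul (S.rng a) b = b
  rw [h, S.rng_mul_self]

lemma range_pairInvSelf : Set.range S.pairInvSelf = S.mulPair ⁻¹' S.unitSpace := by
  ext p
  refine ⟨?_, fun hp => ⟨p.1.2, Subtype.ext (Prod.ext ?_ rfl)⟩⟩
  · rintro ⟨a, rfl⟩
    exact S.src_mem_unitSpace a
  · change S.inv p.1.2 = p.1.1
    rw [S.eq_inv_of_mul_mem_unitSpace p.2 hp, S.inv_inv]

variable [TopologicalSpace G]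

def invHomeomorph (hinv : Continuous S.inv) : G ≃ₜ G :=
  ⟨⟨S.inv, S.inv, S.inv_inv, S.inv_inv⟩, hinv, hinv⟩

lemma isLocalHomeomorph_rng_iff_src (hinv : Continuous S.inv) :
    IsLocalHomeomorph S.rng ↔ IsLocalHomeomorph S.src := by
  have hrng : S.rng = S.src ∘ S.invHomeomorph hinv := funext fun a => (S.src_inv a).symm
  have hsrc : S.src = S.rng ∘ S.invHomeomorph hinv := funext fun a => (S.rng_inv a).symm
  exact ⟨fun h => hsrc ▸ h.comp (S.invHomeomorph hinv).isLocalHomeomorph,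
    fun h => hrng ▸ h.comp (S.invHomeomorph hinv).isLocalHomeomorph⟩

def shearHomeomorph (hmul : Continuous S.mulPair) (hinv : Continuous S.inv) :
    S.ComposablePairs ≃ₜ S.rng.Pullback S.rng where
  toFun p := ⟨(p.1.1, S.mulPair p), (S.rng_mul p.2).symm⟩
  invFun q := ⟨(q.fst, S.mul (S.inv q.fst) q.snd), S.comp_inv_mul q.2⟩
  left_inv p := Subtype.ext (Prod.ext rfl (S.inv_mul_cancel p.2))
  right_inv q := Subtype.ext (Prod.ext rfl (S.mul_inv_mul q.2))
  continuous_toFun := ((continuous_fst.comp continuous_subtype_val).prodMk hmul).subtype_mk _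
  continuous_invFun := by
    have hfst : Continuous fun q : S.rng.Pullback S.rng => q.fst :=
      continuous_fst.comp continuous_subtype_val
    have hsnd : Continuous fun q : S.rng.Pullback S.rng => q.snd :=
      continuous_snd.comp continuous_subtype_val
    have hdiv : Continuous fun q : S.rng.Pullback S.rng => S.mul (S.inv q.fst) q.snd :=
      hmul.comp (((hinv.comp hfst).prodMk hsnd).subtype_mk fun q => S.comp_inv_left_iff_s3.mpr q.2)
    exact (hfst.prodMk hdiv).subtype_mk _

lemma isLocalHomeomorph_mulPair (hmul : Continuous S.mulPair) (hinv : Continuous S.inv)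
    (hr : IsLocalHomeomorph S.rng) : IsLocalHomeomorph S.mulPair :=
  (hr.pullback_snd hr.continuous).comp (S.shearHomeomorph hmul hinv).isLocalHomeomorph

lemma isOpenEmbedding_pairInvSelf (hmul : Continuous S.mulPair) (hinv : Continuous S.inv)
    (hU : IsOpen S.unitSpace) : IsOpenEmbedding S.pairInvSelf := by
  refine ⟨Function.LeftInverse.isEmbedding (f := fun p : S.ComposablePairs => p.1.2)
    (fun a => rfl) (continuous_snd.comp continuous_subtype_val)
    ((hinv.prodMk continuous_id).subtype_mk _), ?_⟩
  rw [range_pairInvSelf]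
  exact hU.preimage hmul

lemma isLocalHomeomorph_src (hmul : Continuous S.mulPair) (hinv : Continuous S.inv)
    (hU : IsOpen S.unitSpace) (hm : IsLocalHomeomorph S.mulPair) : IsLocalHomeomorph S.src := by
  have hsrc : S.mulPair ∘ S.pairInvSelf = S.src := rfl
  exact hsrc ▸ hm.comp (S.isOpenEmbedding_pairInvSelf hmul hinv hU).isLocalHomeomorph

end GroupoidStr

theorem stmt3_general {G : Type*} [TopologicalSpace G] (S : GroupoidStr G)
    (contMul : Continuous fun p : {q : G × G // S.Comp q.1 q.2} => S.mul p.1.1 p.1.2)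
    (contInv : Continuous S.inv) :
    List.TFAE [IsLocalHomeomorph S.src,
      IsLocalHomeomorph S.rng,
      IsOpen S.unitSpace ∧
        IsLocalHomeomorph (fun p : {q : G × G // S.Comp q.1 q.2} => S.mul p.1.1 p.1.2)] := by
  change Continuous S.mulPair at contMul
  change List.TFAE [_, _, _ ∧ IsLocalHomeomorph S.mulPair]
  tfae_have 1 ↔ 2 := (S.isLocalHomeomorph_rng_iff_src contInv).symm
  tfae_have 2 → 3 := fun hr =>
    ⟨hr.isOpenMap.isOpen_range, S.isLocalHomeomorph_mulPair contMul contInv hr⟩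
  tfae_have 3 → 1 := fun ⟨hU, hm⟩ => S.isLocalHomeomorph_src contMul contInv hU hm
  tfae_finish

/-- For a second countable, locally compact, Hausdorff topological groupoid `G`,
the following are equivalent: (a) the source map is a local homeomorphism;
(b) the range map is a local homeomorphism; (c) `G` is `r`-discrete (the unit space is
open) and the composition map `G⁽²⁾ → G` is a local homeomorphism. -/
theorem stmt3 {G : Type*} [TopologicalSpace G] [SecondCountableTopology G]
    [LocallyCompactSpace G] [T2Space G] (S : GroupoidStr G)
    (contMul : Continuous fun p : {q : G × G // S.Comp q.1 q.2} => S.mul p.1.1 p.1.2)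
    (contInv : Continuous S.inv) :
    List.TFAE [IsLocalHomeomorph S.src,
      IsLocalHomeomorph S.rng,
      IsOpen S.unitSpace ∧
        IsLocalHomeomorph (fun p : {q : G × G // S.Comp q.1 q.2} => S.mul p.1.1 p.1.2)] :=
  stmt3_general S contMul contInv
end

section
/- Let X be a topological space equipped with an equivalence relation, and for x ∈ X let [x] denote the equivalence class of x. If x, y ∈ X satisfy closure([x]) = closure([y]) and [x] is locally closed in X, then [x] = [y]. -/
/-- Let `X` be a topological space with an equivalence relation `r`, and write
`[x] = {z | r z x}` for the equivalence class of `x`.  If `closure [x] = closure [y]`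
and `[x]` is locally closed in `X`, then `[x] = [y]`. -/
theorem stmt4 {X : Type*} [TopologicalSpace X] (r : X → X → Prop) (hr : Equivalence r)
    (x y : X) (hcl : closure {z | r z x} = closure {z | r z y})
    (hlc : IsLocallyClosed {z | r z x}) :
    {z | r z x} = {z | r z y} := by
  obtain ⟨U, Z, hU, hZ, hUZ⟩ := hlc
  by_cases hxy : r x y
  · ext z
    exact ⟨fun hz => hr.trans hz hxy, fun hz => hr.trans hz (hr.symm hxy)⟩
  -- classes are disjoint
  have hdisj : Disjoint {z | r z x} {z | r z y} := by
    rw [Set.disjoint_left]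
    intro a hax hay
    exact hxy (hr.trans (hr.symm hax) hay)
  have hclZ : closure {z | r z x} ⊆ Z := by
    rw [← hZ.closure_eq]
    exact closure_mono (hUZ ▸ Set.inter_subset_right)
  have hC : IsClosed (closure {z | r z x} \ {z | r z x}) := by
    have : closure {z | r z x} \ {z | r z x} = closure {z | r z x} ∩ Uᶜ := by
      ext a
      simp only [Set.mem_diff, Set.mem_inter_iff, Set.mem_compl_iff]
      refine ⟨fun ⟨h1, h2⟩ => ⟨h1, fun hu => h2 (hUZ ▸ ⟨hu, hclZ h1⟩)⟩,
        fun ⟨h1, h2⟩ => ⟨h1, fun hs => h2 (hUZ ▸ hs).1⟩⟩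
    rw [this]
    exact isClosed_closure.inter hU.isClosed_compl
  have hsub : {z | r z y} ⊆ closure {z | r z x} \ {z | r z x} := fun a ha =>
    ⟨hcl ▸ subset_closure ha, fun hax => hdisj.le_bot ⟨hax, ha⟩⟩
  have : x ∈ closure {z | r z x} \ {z | r z x} := by
    have hx : x ∈ closure {z | r z y} := hcl ▸ subset_closure (hr.refl x)
    exact hC.closure_subset ((closure_mono hsub) (hcl ▸ hx : x ∈ closure {z | r z y}))
  exact absurd (hr.refl x) this.2
end

section
/- Let Λ be a row-finite k-graph and let x, y ∈ Λ^∞. Then x is frequently divertable to [y] if and only if x belongs to the closure of [y] in the cylinder topology on Λ^∞. -/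
/-- A `k`-graph: a countable small category (objects being identified with their
identity morphisms, so that the morphism set `M` carries everything) together with a
degree functor `d : Λ → ℕ^k` satisfying the unique factorisation property. -/
structure KGraph (k : ℕ) : Type 1 where
  M : Type
  countableM : Countable M
  rng : M → M
  src : M → M
  comp : M → M → M
  d : M → Fin k → ℕ
  src_src : ∀ a, src (src a) = src a
  rng_src : ∀ a, rng (src a) = src a
  src_rng : ∀ a, src (rng a) = rng a
  rng_rng : ∀ a, rng (rng a) = rng a
  comp_src_self : ∀ a, comp a (src a) = a
  rng_comp_self : ∀ a, comp (rng a) a = a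
  rng_comp : ∀ a b, src a = rng b → rng (comp a b) = rng a
  src_comp : ∀ a b, src a = rng b → src (comp a b) = src b
  comp_assoc : ∀ a b c, src a = rng b → src b = rng c →
    comp (comp a b) c = comp a (comp b c)
  d_src : ∀ a, d (src a) = 0
  d_comp : ∀ a b, src a = rng b → d (comp a b) = d a + d b
  factor : ∀ a (m n : Fin k → ℕ), d a = m + n →
    ∃! p : M × M, src p.1 = rng p.2 ∧ comp p.1 p.2 = a ∧ d p.1 = m ∧ d p.2 = n

namespace KGraph

variable {k : ℕ}

/-- The objects of `Λ`, identified with the identity morphisms. -/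
def IsObj (Λ : KGraph k) (v : Λ.M) : Prop := Λ.rng v = v

/-- `Λ` is row-finite: each `vΛ^m` is finite. -/
def RowFinite (Λ : KGraph k) : Prop :=
  ∀ v, Λ.IsObj v → ∀ m : Fin k → ℕ, {a : Λ.M | Λ.rng a = v ∧ Λ.d a = m}.Finite

/-- `Λ` has no sources: each `vΛ^m` is nonempty. -/
def NoSources (Λ : KGraph k) : Prop :=
  ∀ v, Λ.IsObj v → ∀ m : Fin k → ℕ, ∃ a : Λ.M, Λ.rng a = v ∧ Λ.d a = m

end KGraph

/-- An infinite path of a `k`-graph `Λ`: a degree-preserving functor `x : Ω_k → Λ`,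
recorded by its values `seg m n _ = x(m, n)` on the morphisms `(m, n)` (for `m ≤ n`)
of `Ω_k`; the vertex `x(m)` is `seg m m _`. -/
structure InfPath {k : ℕ} (Λ : KGraph k) where
  seg : ∀ m n : Fin k → ℕ, m ≤ n → Λ.M
  d_seg : ∀ m n (h : m ≤ n), Λ.d (seg m n h) = n - m
  rng_seg : ∀ m n (h : m ≤ n), Λ.rng (seg m n h) = seg m m le_rfl
  src_seg : ∀ m n (h : m ≤ n), Λ.src (seg m n h) = seg n n le_rfl
  comp_seg : ∀ m n p (h1 : m ≤ n) (h2 : n ≤ p),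
    Λ.comp (seg m n h1) (seg n p h2) = seg m p (h1.trans h2)

namespace InfPath

variable {k : ℕ} {Λ : KGraph k}

/-- The vertex `x(n)` of an infinite path `x`. -/
def vert (x : InfPath Λ) (n : Fin k → ℕ) : Λ.M := x.seg n n le_rfl

/-- The shift `σ^p(x)`, given by `σ^p(x)(m, n) = x(m + p, n + p)`. -/
def shift (x : InfPath Λ) (p : Fin k → ℕ) : InfPath Λ where
  seg m n h := x.seg (m + p) (n + p) (add_le_add h le_rfl)
  d_seg m n h := by
    rw [x.d_seg]
    funext i
    simp only [Pi.sub_apply, Pi.add_apply]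
    omega
  rng_seg m n h := x.rng_seg _ _ _
  src_seg m n h := x.src_seg _ _ _
  comp_seg m n p' h1 h2 := x.comp_seg _ _ _ _ _

/-- `x` is shift equivalent to `y` with lag `n ∈ ℤ^k`: there are `p, q ∈ ℕ^k` with
`p - q = n` and `σ^p(x) = σ^q(y)`. -/
def ShiftEquivLag (x y : InfPath Λ) (n : Fin k → ℤ) : Prop :=
  ∃ p q : Fin k → ℕ, (fun i => (p i : ℤ) - (q i : ℤ)) = n ∧ x.shift p = y.shift q

/-- `x` is shift equivalent to `y`. -/
def ShiftEquiv (x y : InfPath Λ) : Prop := ∃ n : Fin k → ℤ, ShiftEquivLag x y n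

/-- `x` is frequently divertable to `[y]`: for every `n ∈ ℕ^k` there is a path in
`x(n)Λ^∞` which is shift equivalent to `y`. -/
def FreqDiv (x y : InfPath Λ) : Prop :=
  ∀ n : Fin k → ℕ, ∃ z : InfPath Λ, z.vert 0 = x.vert n ∧ ShiftEquiv z y

/-- The cylinder topology on `Λ^∞`, generated by the cylinder sets
`Z(α) = {x : x(0, d(α)) = α}` for morphisms `α` of `Λ`. -/
instance : TopologicalSpace (InfPath Λ) :=
  TopologicalSpace.generateFrom
    {S | ∃ a : Λ.M, S = {x : InfPath Λ | x.seg 0 (Λ.d a) zero_le = a}}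

end InfPath

/-!
The cylinders `Z(x(0, n))`, `n ∈ ℕ^k`, form a neighbourhood basis at `x`, so `x` lies in the
closure of `[y]` iff every `Z(x(0, n))` meets `[y]`. If `w ∈ Z(x(0, n))` and `w ∼ y`, then
`σ^n(w) ∈ x(n)Λ^∞` and `σ^n(w) ∼ y`. Conversely, if `z ∈ x(n)Λ^∞` and `z ∼ y`, then the
concatenation `x(0, n) z` lies in `Z(x(0, n))` and is shift equivalent to `z`. The
concatenation is built from its initial segments, which the factorisation property
determines uniquely.
-/

namespace KGraph

variable {k : ℕ}

def IsPrefix (Λ : KGraph k) (b a : Λ.M) : Prop :=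
  ∃ c, Λ.src b = Λ.rng c ∧ Λ.comp b c = a

variable {Λ : KGraph k}

theorem factor_unique {b b' c c' : Λ.M} (hc : Λ.src b = Λ.rng c) (hc' : Λ.src b' = Λ.rng c')
    (h : Λ.comp b c = Λ.comp b' c') (hd : Λ.d b = Λ.d b') : b = b' ∧ c = c' := by
  have hdc : Λ.d c = Λ.d c' := by
    have := Λ.d_comp b c hc
    rw [h, Λ.d_comp b' c' hc', hd] at this
    exact (add_left_cancel this).symm
  exact Prod.ext_iff.mp <|
    (Λ.factor _ _ _ (Λ.d_comp b c hc)).unique (y₁ := (b, c)) (y₂ := (b', c'))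
      ⟨hc, rfl, rfl, rfl⟩ ⟨hc', h.symm, hd.symm, hdc.symm⟩

theorem comp_left_cancel {b c c' : Λ.M} (hc : Λ.src b = Λ.rng c) (hc' : Λ.src b = Λ.rng c')
    (h : Λ.comp b c = Λ.comp b c') : c = c' :=
  (factor_unique hc hc' h rfl).2

theorem eq_src_of_comp_eq_self {b c : Λ.M} (hc : Λ.src b = Λ.rng c) (h : Λ.comp b c = b) :
    c = Λ.src b :=
  comp_left_cancel hc (Λ.rng_src b).symm (h.trans (Λ.comp_src_self b).symm)

theorem isPrefix_rng (a : Λ.M) : Λ.IsPrefix (Λ.rng a) a :=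
  ⟨a, Λ.src_rng a, Λ.rng_comp_self a⟩

theorem d_rng (a : Λ.M) : Λ.d (Λ.rng a) = 0 := by
  rw [← Λ.src_rng]
  exact Λ.d_src _

theorem IsPrefix.trans {a b c : Λ.M} : Λ.IsPrefix a b → Λ.IsPrefix b c → Λ.IsPrefix a c
  | ⟨u, hu, hab⟩, ⟨v, hv, hbc⟩ => by
    subst hab hbc
    rw [Λ.src_comp _ _ hu] at hv
    exact ⟨Λ.comp u v, by rw [Λ.rng_comp _ _ hv, hu], (Λ.comp_assoc _ _ _ hu hv).symm⟩

theorem IsPrefix.eq_of_d_eq {a b b' : Λ.M} (hb : Λ.IsPrefix b a) (hb' : Λ.IsPrefix b' a)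
    (hd : Λ.d b = Λ.d b') : b = b' := by
  obtain ⟨c, hc, rfl⟩ := hb
  obtain ⟨c', hc', h⟩ := hb'
  exact (factor_unique hc hc' h.symm hd).1

theorem exists_isPrefix {a : Λ.M} {q : Fin k → ℕ} (hq : q ≤ Λ.d a) :
    ∃ b, Λ.IsPrefix b a ∧ Λ.d b = q := by
  obtain ⟨⟨b, c⟩, ⟨hbc, hba, hb, -⟩, -⟩ :=
    Λ.factor a q (Λ.d a - q) (add_tsub_cancel_of_le hq).symm
  exact ⟨b, ⟨c, hbc, hba⟩, hb⟩

theorem IsPrefix.isPrefix_of_d_le {a b b' : Λ.M} (hb : Λ.IsPrefix b a)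
    (hb' : Λ.IsPrefix b' a) (hd : Λ.d b ≤ Λ.d b') : Λ.IsPrefix b b' := by
  obtain ⟨p, hp, hpd⟩ := exists_isPrefix hd
  rwa [(hp.trans hb').eq_of_d_eq hb hpd] at hp

end KGraph

namespace InfPath

open KGraph Topology

variable {k : ℕ} {Λ : KGraph k}

theorem ext_seg {x y : InfPath Λ}
    (h : ∀ m n (hmn : m ≤ n), x.seg m n hmn = y.seg m n hmn) : x = y := by
  cases x; cases y
  congr
  funext m n hmn
  exact h m n hmn

theorem seg_congr (x : InfPath Λ) {m n m' n' : Fin k → ℕ} (hm : m = m') (hn : n = n')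
    (h : m ≤ n) (h' : m' ≤ n') : x.seg m n h = x.seg m' n' h' := by
  subst hm hn
  rfl

theorem shift_shift (x : InfPath Λ) (p q : Fin k → ℕ) :
    (x.shift p).shift q = x.shift (q + p) :=
  ext_seg fun _ _ _ => x.seg_congr (add_assoc ..) (add_assoc ..) _ _

theorem ShiftEquiv.symm {x y : InfPath Λ} : ShiftEquiv x y → ShiftEquiv y x
  | ⟨_, p, q, _, h⟩ => ⟨_, q, p, rfl, h.symm⟩

theorem ShiftEquiv.trans {x y z : InfPath Λ} : ShiftEquiv x y → ShiftEquiv y z → ShiftEquiv x z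
  | ⟨_, p, q, _, h⟩, ⟨_, p', q', _, h'⟩ => ⟨_, p' + p, q + q', rfl, by
    rw [← shift_shift, h, shift_shift, add_comm, ← shift_shift, h', shift_shift]⟩

theorem shift_shiftEquiv (x : InfPath Λ) (p : Fin k → ℕ) : ShiftEquiv (x.shift p) x :=
  ⟨_, 0, p, rfl, by rw [shift_shift, zero_add]⟩

theorem vert_zero_shift (x : InfPath Λ) (n : Fin k → ℕ) :
    (x.shift n).vert 0 = Λ.src (x.seg 0 n zero_le) :=
  (x.seg_congr (zero_add n) (zero_add n) _ le_rfl).trans (x.src_seg 0 n zero_le).symm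

theorem isPrefix_seg (x : InfPath Λ) {m n : Fin k → ℕ} (h : m ≤ n) :
    Λ.IsPrefix (x.seg 0 m zero_le) (x.seg 0 n zero_le) :=
  ⟨x.seg m n h, by rw [x.src_seg, x.rng_seg], x.comp_seg ..⟩

theorem seg_zero_eq_of_le {x z : InfPath Λ} {m n : Fin k → ℕ} (hmn : m ≤ n)
    (h : z.seg 0 n zero_le = x.seg 0 n zero_le) : z.seg 0 m zero_le = x.seg 0 m zero_le :=
  (z.isPrefix_seg hmn).eq_of_d_eq (h ▸ x.isPrefix_seg hmn) (by rw [z.d_seg, x.d_seg])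

section OfPrefixes

variable (c : (Fin k → ℕ) → Λ.M) (hd : ∀ q, Λ.d (c q) = q)
  (hc : ∀ q q', q ≤ q' → Λ.IsPrefix (c q) (c q'))

/-- The infinite path whose initial segments `x(0, q)` are the `c q`; its segment
`x(m, n)` is the unique `b` with `c m b = c n`. -/
noncomputable def ofPrefixes : InfPath Λ where
  seg m n h := (hc m n h).choose
  d_seg m n h := by
    have hdn := Λ.d_comp _ _ (hc m n h).choose_spec.1
    rw [(hc m n h).choose_spec.2, hd, hd] at hdn
    exact eq_tsub_of_add_eq (add_comm m _ ▸ hdn).symm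
  rng_seg m n h := (hc m n h).choose_spec.1.symm.trans
    (eq_src_of_comp_eq_self (hc m m le_rfl).choose_spec.1 (hc m m le_rfl).choose_spec.2).symm
  src_seg m n h := ((Λ.src_comp _ _ (hc m n h).choose_spec.1).symm.trans
    (congrArg Λ.src (hc m n h).choose_spec.2)).trans
    (eq_src_of_comp_eq_self (hc n n le_rfl).choose_spec.1 (hc n n le_rfl).choose_spec.2).symm
  comp_seg m n p h1 h2 := by
    obtain ⟨hmn, hmn'⟩ := (hc m n h1).choose_spec
    obtain ⟨hnp, hnp'⟩ := (hc n p h2).choose_spec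
    obtain ⟨hmp, hmp'⟩ := (hc m p (h1.trans h2)).choose_spec
    have hs : Λ.src (hc m n h1).choose = Λ.rng (hc n p h2).choose :=
      ((Λ.src_comp _ _ hmn).symm.trans (congrArg Λ.src hmn')).trans hnp
    refine comp_left_cancel ((Λ.rng_comp _ _ hs).trans hmn.symm).symm hmp ?_
    rw [← Λ.comp_assoc _ _ _ hmn hs, hmn', hnp', hmp']

variable {c hd hc}

theorem ofPrefixes_seg_eq {m n : Fin k → ℕ} (h : m ≤ n) {b : Λ.M}
    (hb : Λ.src (c m) = Λ.rng b) (hcb : Λ.comp (c m) b = c n) :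
    (ofPrefixes c hd hc).seg m n h = b :=
  comp_left_cancel (hc m n h).choose_spec.1 hb ((hc m n h).choose_spec.2.trans hcb.symm)

theorem ofPrefixes_seg_zero (n : Fin k → ℕ) : (ofPrefixes c hd hc).seg 0 n zero_le = c n := by
  have hc0 : c 0 = Λ.rng (c n) :=
    (hc 0 n zero_le).eq_of_d_eq (isPrefix_rng _) (by rw [hd, d_rng])
  have hsrc : Λ.src (c 0) = Λ.rng (c n) := by rw [hc0, Λ.src_rng]
  have hcomp : Λ.comp (c 0) (c n) = c n := by rw [hc0, Λ.rng_comp_self]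
  exact ofPrefixes_seg_eq _ hsrc hcomp

end OfPrefixes

/-- The concatenation `x(0, n) z` of a path `z ∈ x(n)Λ^∞`. -/
theorem exists_seg_zero_eq_and_shift_eq (x z : InfPath Λ) (n : Fin k → ℕ)
    (hz : z.vert 0 = x.vert n) :
    ∃ w : InfPath Λ, w.seg 0 n zero_le = x.seg 0 n zero_le ∧ w.shift n = z := by
  set A := x.seg 0 n zero_le
  have hA : ∀ q, Λ.src A = Λ.rng (z.seg 0 q zero_le) := fun q => by
    rw [x.src_seg, z.rng_seg]
    exact hz.symm
  have hzz : ∀ {q q'} (h : q ≤ q'), Λ.src (z.seg 0 q zero_le) = Λ.rng (z.seg q q' h) :=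
    fun _ => by rw [z.src_seg, z.rng_seg]
  -- `c q` is the degree-`q` initial segment of `W q = x(0, n) z(0, q)`, of degree `n + q`
  set W : (Fin k → ℕ) → Λ.M := fun q => Λ.comp A (z.seg 0 q zero_le)
  have hdW : ∀ q, Λ.d (W q) = n + q := fun q => by
    simp only [W, Λ.d_comp _ _ (hA q), A, x.d_seg, z.d_seg, tsub_zero]
  have hWW : ∀ {q q'}, q ≤ q' → Λ.IsPrefix (W q) (W q') := fun h =>
    ⟨_, by rw [Λ.src_comp _ _ (hA _)]; exact hzz h,
      by rw [Λ.comp_assoc _ _ _ (hA _) (hzz h), z.comp_seg]⟩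
  choose c hcW hcd using fun q =>
    exists_isPrefix (a := W q) (q := q) (by rw [hdW]; exact le_add_self)
  have hc : ∀ q q', q ≤ q' → Λ.IsPrefix (c q) (c q') := fun q q' h =>
    ((hcW q).trans (hWW h)).isPrefix_of_d_le (hcW q') (by rw [hcd, hcd]; exact h)
  have hc_add : ∀ m, c (m + n) = W m := fun m =>
    (hcW _).eq_of_d_eq (hWW (le_add_right le_rfl)) (by rw [hcd, hdW, add_comm])
  refine ⟨ofPrefixes c hcd hc, ?_, ext_seg fun m m' h => ?_⟩
  · have hcn : c n = W 0 := by simpa only [zero_add] using hc_add 0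
    rw [ofPrefixes_seg_zero, hcn]
    show Λ.comp A (z.vert 0) = A
    rw [hz]
    exact (congrArg (Λ.comp A) (x.src_seg 0 n zero_le).symm).trans (Λ.comp_src_self A)
  · show (ofPrefixes c hcd hc).seg (m + n) (m' + n) (add_le_add h le_rfl) = z.seg m m' h
    refine ofPrefixes_seg_eq _ ?_ ?_
    · rw [hc_add, Λ.src_comp _ _ (hA m)]
      exact hzz h
    · rw [hc_add, hc_add, Λ.comp_assoc _ _ _ (hA m) (hzz h), z.comp_seg]

theorem isOpen_setOf_seg_zero_eq (x : InfPath Λ) (n : Fin k → ℕ) :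
    IsOpen {z : InfPath Λ | z.seg 0 n zero_le = x.seg 0 n zero_le} := by
  have hd : Λ.d (x.seg 0 n zero_le) = n := by rw [x.d_seg, tsub_zero]
  refine TopologicalSpace.isOpen_generateFrom_of_mem ⟨x.seg 0 n zero_le, Set.ext fun z => ?_⟩
  rw [Set.mem_ofPred_eq, Set.mem_ofPred_eq, z.seg_congr rfl hd _ zero_le]

theorem exists_setOf_seg_zero_eq_subset {U : Set (InfPath Λ)} (hU : IsOpen U) {x : InfPath Λ}
    (hx : x ∈ U) : ∃ n, {z : InfPath Λ | z.seg 0 n zero_le = x.seg 0 n zero_le} ⊆ U := by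
  induction hU with
  | basic S hS =>
    obtain ⟨a, rfl⟩ := hS
    exact ⟨Λ.d a, fun z hz => hz.trans hx⟩
  | univ => exact ⟨0, Set.subset_univ _⟩
  | inter U V _ _ ihU ihV =>
    obtain ⟨n₁, h₁⟩ := ihU hx.1
    obtain ⟨n₂, h₂⟩ := ihV hx.2
    exact ⟨n₁ ⊔ n₂, fun z hz =>
      ⟨h₁ (seg_zero_eq_of_le le_sup_left hz), h₂ (seg_zero_eq_of_le le_sup_right hz)⟩⟩
  | sUnion S _ ih =>
    obtain ⟨T, hT, hxT⟩ := hx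
    obtain ⟨n, hn⟩ := ih T hT hxT
    exact ⟨n, hn.trans (Set.subset_sUnion_of_mem hT)⟩

theorem nhds_basis_seg_zero (x : InfPath Λ) :
    (𝓝 x).HasBasis (fun _ => True)
      fun n => {z : InfPath Λ | z.seg 0 n zero_le = x.seg 0 n zero_le} := by
  refine ⟨fun t => ⟨fun ht => ?_, fun ⟨n, _, hn⟩ =>
    Filter.mem_of_superset ((isOpen_setOf_seg_zero_eq x n).mem_nhds rfl) hn⟩⟩
  obtain ⟨U, hUt, hU, hxU⟩ := mem_nhds_iff.mp ht
  obtain ⟨n, hn⟩ := exists_setOf_seg_zero_eq_subset hU hxU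
  exact ⟨n, trivial, hn.trans hUt⟩

end InfPath

open InfPath in
theorem stmt6_general {k : ℕ} (Λ : KGraph k)
    (x y : InfPath Λ) :
    InfPath.FreqDiv x y ↔ x ∈ closure {z : InfPath Λ | InfPath.ShiftEquiv z y} := by
  simp only [mem_closure_iff_nhds_basis (nhds_basis_seg_zero x), forall_const]
  refine forall_congr' fun n => ⟨?_, ?_⟩
  · rintro ⟨z, hz, hzy⟩
    obtain ⟨w, hw, rfl⟩ := exists_seg_zero_eq_and_shift_eq x z n hz
    exact ⟨w, (shift_shiftEquiv w n).symm.trans hzy, hw⟩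
  · rintro ⟨w, hwy, hw⟩
    refine ⟨w.shift n, ?_, (shift_shiftEquiv w n).trans hwy⟩
    rw [vert_zero_shift, hw, x.src_seg]
    rfl

/-- For a row-finite `k`-graph `Λ` and `x, y ∈ Λ^∞`: `x` is frequently divertable to
`[y]` if and only if `x` lies in the closure of `[y]` in the cylinder topology. -/
theorem stmt6 {k : ℕ} (hk : 1 ≤ k) (Λ : KGraph k) (hrf : Λ.RowFinite)
    (x y : InfPath Λ) :
    InfPath.FreqDiv x y ↔ x ∈ closure {z : InfPath Λ | InfPath.ShiftEquiv z y} :=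
  stmt6_general Λ x y
end

section
/- Let E be a row-finite directed graph. Then E contains no cycle if and only if for every x ∈ E^∞ and every n ∈ ℤ, x ∼_n x implies n = 0. (Equivalently, the path groupoid G_E of E is principal if and only if E contains no cycles, since G_E is principal exactly when every infinite path is shift equivalent to itself only with lag 0.) -/
/-- A directed graph: countable sets of vertices and edges, with range and source
maps. -/
structure DGraph : Type 1 where
  V : Type
  E : Type
  countableV : Countable V
  countableE : Countable E
  r : E → V
  s : E → V

namespace DGraph

/-- `E` is row-finite: every vertex receives only finitely many edges. -/
def RowFinite (G : DGraph) : Prop := ∀ v : G.V, {e : G.E | G.r e = v}.Finite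

/-- A source of `E`: a vertex receiving no edges. -/
def IsSource (G : DGraph) (v : G.V) : Prop := ∀ e : G.E, G.r e ≠ v

end DGraph

/-- A (finite or infinite) path in the directed graph `G`.  `edge i` is the
`(i+1)`-st edge of the path (or `none` beyond the end of the path); once `none`
always `none`, so a path is either a vertex (`rng`, with no edges), a finite path,
or an infinite path.  Edges are composed so that `s(edge i) = r(edge (i+1))`. -/
structure LPath (G : DGraph) where
  rng : G.V
  edge : ℕ → Option G.E
  edge_closed : ∀ i, edge i = none → edge (i + 1) = none
  rng_compat : ∀ e, edge 0 = some e → G.r e = rng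
  compat : ∀ i e f, edge i = some e → edge (i + 1) = some f → G.s e = G.r f

namespace LPath

variable {G : DGraph}

/-- The vertex `x(n)` of the path `x` (a junk value, the range, beyond the length
of the path). -/
def vert (x : LPath G) : ℕ → G.V
  | 0 => x.rng
  | n + 1 =>
    match x.edge n with
    | some e => G.s e
    | none => x.rng

/-- `x` is an infinite path, i.e. a member of `E^∞`. -/
def Infinite (x : LPath G) : Prop := ∀ i, (x.edge i).isSome

/-- `n ≤ |x|`: the first `n` edges of `x` all exist. -/
def LeLen (x : LPath G) (n : ℕ) : Prop := ∀ i, i < n → (x.edge i).isSome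

/-- `|x| = n`: `x` is a finite path of length `n`. -/
def LenEq (x : LPath G) (n : ℕ) : Prop := x.edge n = none ∧ x.LeLen n

theorem vert_eq (x : LPath G) (m : ℕ) (e : G.E) (h : x.edge m = some e) :
    G.r e = x.vert m := by
  cases m with
  | zero => exact x.rng_compat e h
  | succ n =>
    cases hn : x.edge n with
    | none => exact absurd h (by simp [x.edge_closed n hn])
    | some f =>
      have hc := x.compat n f e hn h
      simp only [vert, hn]
      exact hc.symm

/-- The shifted path `σ^m(x)` (meaningful when `m ≤ |x|`). -/
def shift (x : LPath G) (m : ℕ) : LPath G where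
  rng := x.vert m
  edge i := x.edge (m + i)
  edge_closed i h := x.edge_closed (m + i) h
  rng_compat e he := x.vert_eq m e he
  compat i e f he hf := x.compat (m + i) e f he hf

/-- `x` is shift equivalent to `y` with lag `n ∈ ℤ`: there are `p, q ∈ ℕ` with
`p - q = n`, `p ≤ |x|`, `q ≤ |y|` and `σ^p(x) = σ^q(y)`. -/
def ShiftEquivLag (x y : LPath G) (n : ℤ) : Prop :=
  ∃ p q : ℕ, (p : ℤ) - (q : ℤ) = n ∧ x.LeLen p ∧ y.LeLen q ∧ x.shift p = y.shift q

/-- `x` is shift equivalent to `y`. -/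
def ShiftEquiv (x y : LPath G) : Prop := ∃ n : ℤ, ShiftEquivLag x y n

/-- `x` belongs to `E^{≤∞}`: it is infinite, or finite with its source a source
of the graph. -/
def Boundary (x : LPath G) : Prop :=
  x.Infinite ∨ ∃ n : ℕ, x.LenEq n ∧ G.IsSource (x.vert n)

/-- `x` is frequently divertable to `[y]`: for every `n ≤ |x|` there is a path in
`x(n)E^{≤∞}` that is shift equivalent to `y`. -/
def FreqDiv (x y : LPath G) : Prop :=
  ∀ n : ℕ, x.LeLen n → ∃ z : LPath G, z.Boundary ∧ z.rng = x.vert n ∧ ShiftEquiv z y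

/-- The segment `x(m, n)` of `x` is a cycle: it is closed (`x(m) = x(n)`) and the
sources `x(i)`, `m < i ≤ n`, of its edges are pairwise distinct. -/
def HasCycleAt (x : LPath G) (m n : ℕ) : Prop :=
  m < n ∧ x.LeLen n ∧ x.vert m = x.vert n ∧
    ∀ i j, m < i → i ≤ n → m < j → j ≤ n → x.vert i = x.vert j → i = j

/-- `x` contains a cycle. -/
def ContainsCycle (x : LPath G) : Prop := ∃ m n, x.HasCycleAt m n

end LPath

/-- A cycle in `G`: a finite path `α = α_1 ⋯ α_len` (here 0-indexed, and with junk
values of `edge` beyond `len`) of non-zero length with `r(α) = s(α)` and whose edges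
have pairwise distinct sources. -/
structure DCycle (G : DGraph) where
  len : ℕ
  len_pos : 0 < len
  edge : ℕ → G.E
  compat : ∀ i, i + 1 < len → G.s (edge i) = G.r (edge (i + 1))
  closed : G.s (edge (len - 1)) = G.r (edge 0)
  distinct : ∀ i j, i < len → j < len → G.s (edge i) = G.s (edge j) → i = j

namespace DCycle

variable {G : DGraph}

/-- `f` is an entry to the cycle `c`: `r(f) = r(c_i)` and `f ≠ c_i` for some `i`. -/
def IsEntry (c : DCycle G) (f : G.E) : Prop :=
  ∃ i, i < c.len ∧ G.r f = G.r (c.edge i) ∧ f ≠ c.edge i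

/-- The edge `f` lies in the cycle `c`. -/
def EdgeMem (c : DCycle G) (f : G.E) : Prop := ∃ i, i < c.len ∧ c.edge i = f

end DCycle


theorem LPath.ext' {G : DGraph} {x y : LPath G} (h1 : x.rng = y.rng)
    (h2 : x.edge = y.edge) : x = y := by
  cases x; cases y; dsimp at h1 h2; subst h1; subst h2; rfl

/-- The infinite path obtained by repeating a cycle. -/
def DCycle.toPath {G : DGraph} (c : DCycle G) : LPath G where
  rng := G.r (c.edge 0)
  edge k := some (c.edge (k % c.len))
  edge_closed i h := by simp at h
  rng_compat e he := by
    rw [Option.some_inj] at he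
    subst he
    rw [Nat.zero_mod]
  compat i e f he hf := by
    rw [Option.some_inj] at he hf
    subst he; subst hf
    have hlt : i % c.len < c.len := Nat.mod_lt _ c.len_pos
    have key : (i + 1) % c.len = (i % c.len + 1) % c.len := by
      conv_lhs => rw [← Nat.div_add_mod i c.len]
      rw [Nat.add_assoc, Nat.mul_add_mod]
    rcases Nat.lt_or_ge (i % c.len + 1) c.len with h | h
    · rw [key, Nat.mod_eq_of_lt h]
      exact c.compat _ h
    · have h1 : i % c.len + 1 = c.len := by omega
      have h2 : i % c.len = c.len - 1 := by omega
      rw [key, h1, Nat.mod_self, h2]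
      exact c.closed

theorem exists_cycle {G : DGraph} (x : LPath G) (hx : x.Infinite) (p q : ℕ)
    (hqp : q < p) (hs : x.shift p = x.shift q) : Nonempty (DCycle G) := by
  classical
  set e : ℕ → G.E := fun k => (x.edge k).get (hx k) with hedef
  have he : ∀ k, x.edge k = some (e k) := fun k => (Option.some_get (hx k)).symm
  have hcomp : ∀ m, G.s (e m) = G.r (e (m + 1)) :=
    fun m => x.compat m _ _ (he m) (he (m + 1))
  have hedge : ∀ k, e (p + k) = e (q + k) := by
    intro k
    have h1 : x.edge (p + k) = x.edge (q + k) := congrFun (congrArg LPath.edge hs) k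
    have h2 := (he (p + k)).symm.trans (h1.trans (he (q + k)))
    exact Option.some.inj h2
  set d := p - q with hd
  have hd0 : 0 < d := by omega
  set v : ℕ → G.V := fun k => G.s (e (q + k)) with hvdef
  have hv : ∀ k, v (k + d) = v k := by
    intro k
    show G.s (e (q + (k + d))) = G.s (e (q + k))
    have h1 : q + (k + d) = p + k := by omega
    rw [h1, hedge]
  have hP : ∃ j, 0 < j ∧ ∃ i, i < j ∧ v i = v j := ⟨d, hd0, 0, hd0, by simpa using (hv 0).symm⟩
  obtain ⟨hj0, i, hij, hvij⟩ := Nat.find_spec hP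
  set j := Nat.find hP with hjdef
  have hmin : ∀ j' : ℕ, j' < j → ¬(0 < j' ∧ ∃ i, i < j' ∧ v i = v j') :=
    fun j' h => Nat.find_min hP h
  have key : ∀ a b, i < a → a < b → b ≤ j → v a ≠ v b := by
    intro a b ha hab hbj hvab
    rcases eq_or_lt_of_le hbj with rfl | hbj'
    · exact hmin a (by omega) ⟨by omega, i, ha, hvij.trans hvab.symm⟩
    · exact hmin b hbj' ⟨by omega, a, hab, hvab⟩
  have hdist : ∀ a b, i < a → a ≤ j → i < b → b ≤ j → v a = v b → a = b := by
    intro a b ha haj hb hbj hab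
    rcases lt_trichotomy a b with h | h | h
    · exact absurd hab (key a b ha h hbj)
    · exact h
    · exact absurd hab.symm (key b a hb h haj)
  refine ⟨⟨j - i, by omega, fun a => e (q + (i + 1 + a)), ?_, ?_, ?_⟩⟩
  · intro a _
    exact hcomp (q + (i + 1 + a))
  · show G.s (e (q + (i + 1 + (j - i - 1)))) = G.r (e (q + (i + 1 + 0)))
    have h1 : i + 1 + (j - i - 1) = j := by omega
    have h2 : i + 1 + 0 = i + 1 := rfl
    rw [h1, h2, show q + (i + 1) = (q + i) + 1 from rfl, ← hcomp (q + i)]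
    exact hvij.symm
  · intro a b ha hb hab
    have := hdist (i + 1 + a) (i + 1 + b) (by omega) (by omega) (by omega) (by omega) hab
    omega

/-- A row-finite directed graph `E` contains no cycles if and only if every infinite
path is shift equivalent to itself only with lag `0` (equivalently, the path groupoid
`G_E` is principal). -/
theorem stmt10 (G : DGraph) (hrf : G.RowFinite) :
    IsEmpty (DCycle G) ↔
      ∀ x : LPath G, x.Infinite → ∀ n : ℤ, LPath.ShiftEquivLag x x n → n = 0 := by
  constructor
  · intro hemp x hx n hse
    obtain ⟨p, q, hpq, _, _, hs⟩ := hse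
    by_contra hn
    have hne : p ≠ q := by
      intro h; apply hn; omega
    rcases Nat.lt_or_ge q p with h | h
    · exact hemp.false (Classical.choice (exists_cycle x hx p q h hs))
    · have h' : p < q := by omega
      exact hemp.false (Classical.choice (exists_cycle x hx q p h' hs.symm))
  · intro hpr
    constructor
    intro c
    have hx : c.toPath.Infinite := fun i => rfl
    have hshift : c.toPath.shift c.len = c.toPath.shift 0 := by
      apply LPath.ext'
      · show c.toPath.vert c.len = c.toPath.vert 0
        have hpos := c.len_pos
        have hlen : c.len = (c.len - 1) + 1 := by omega
        rw [hlen]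
        show c.toPath.vert ((c.len - 1) + 1) = c.toPath.vert 0
        simp only [LPath.vert, DCycle.toPath]
        rw [Nat.mod_eq_of_lt (by omega)]
        exact c.closed
      · funext k
        show c.toPath.edge (c.len + k) = c.toPath.edge (0 + k)
        show some (c.edge ((c.len + k) % c.len)) = some (c.edge ((0 + k) % c.len))
        rw [Nat.add_mod_left, Nat.zero_add]
    have hlag : LPath.ShiftEquivLag c.toPath c.toPath (c.len : ℤ) :=
      ⟨c.len, 0, by simp, fun i _ => rfl, fun i h => absurd h (Nat.not_lt_zero i), hshift⟩
    have := hpr c.toPath hx (c.len : ℤ) hlag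
    have hpos := c.len_pos
    omega
end

section
/- Let E be a row-finite directed graph. Then the following are equivalent: (1) for every x ∈ E^{≤∞}, every path in E^∞ that is frequently divertable to [x] is shift equivalent to x; (2) for every x ∈ E^{≤∞}, there are only finitely many paths in r(x)E^{≤∞} that are shift equivalent to x. -/
namespace LPath

variable {G : DGraph}

theorem ext'_s11 {x y : LPath G} (h1 : x.rng = y.rng) (h2 : x.edge = y.edge) : x = y := by
  cases x; cases y
  simp only at h1 h2
  subst h1; subst h2
  rfl

theorem edge_none_mono {x : LPath G} {n : ℕ} (h : x.edge n = none) :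
    ∀ m, n ≤ m → x.edge m = none := by
  intro m hm
  induction m with
  | zero => simpa [Nat.le_zero.mp hm] using h
  | succ k ih =>
    rcases Nat.lt_or_ge n (k+1) with hlt | hge
    · exact x.edge_closed k (ih (Nat.lt_succ_iff.mp hlt))
    · have : n = k + 1 := le_antisymm hm hge
      exact this ▸ h

theorem vert_some {x : LPath G} {n : ℕ} {e : G.E} (h : x.edge n = some e) :
    x.vert (n+1) = G.s e := by simp [vert, h]

theorem agree_vert {x y : LPath G} {m : ℕ} (hr : x.rng = y.rng)
    (h : ∀ i, i < m → x.edge i = y.edge i) : x.vert m = y.vert m := by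
  cases m with
  | zero => exact hr
  | succ k =>
    have hk := h k (Nat.lt_succ_self k)
    simp only [vert, hk]
    cases y.edge k <;> simp [hr]

@[simp] theorem shift_edge (x : LPath G) (a i : ℕ) : (x.shift a).edge i = x.edge (a + i) := rfl

@[simp] theorem shift_rng (x : LPath G) (a : ℕ) : (x.shift a).rng = x.vert a := rfl

theorem LeLen.mono {x : LPath G} {m n : ℕ} (h : x.LeLen n) (hmn : m ≤ n) : x.LeLen m :=
  fun i hi => h i (lt_of_lt_of_le hi hmn)

theorem Infinite.leLen {x : LPath G} (h : x.Infinite) (n : ℕ) : x.LeLen n :=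
  fun i _ => h i

theorem Infinite.shift {x : LPath G} (h : x.Infinite) (a : ℕ) : (x.shift a).Infinite :=
  fun i => h (a + i)

theorem LeLen.shift {x : LPath G} {a b : ℕ} (h : x.LeLen (a + b)) : (x.shift a).LeLen b :=
  fun i hi => h (a + i) (by omega)

theorem vert_shift {x : LPath G} {a b : ℕ} (h : x.LeLen (a + b)) :
    (x.shift a).vert b = x.vert (a + b) := by
  cases b with
  | zero => rfl
  | succ k =>
    have hs : (x.edge (a + k)).isSome := h (a + k) (by omega)
    rcases Option.isSome_iff_exists.mp hs with ⟨e, he⟩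
    have h1 : (x.shift a).edge k = some e := by simpa using he
    rw [vert_some h1, show a + (k+1) = (a + k) + 1 by omega, vert_some he]

theorem shift_shift {x : LPath G} {a b : ℕ} (h : x.LeLen (a + b)) :
    (x.shift a).shift b = x.shift (a + b) := by
  refine ext'_s11 ?_ (funext fun i => ?_)
  · exact vert_shift h
  · simp [Nat.add_assoc]

theorem shift_zero (x : LPath G) : x.shift 0 = x := by
  refine ext'_s11 rfl (funext fun i => ?_)
  simp

theorem ShiftEquiv.refl (x : LPath G) : ShiftEquiv x x :=
  ⟨0, 0, 0, by simp, fun i hi => by omega, fun i hi => by omega, rfl⟩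

theorem ShiftEquiv.symm {x y : LPath G} (h : ShiftEquiv x y) : ShiftEquiv y x := by
  rcases h with ⟨n, p, q, hn, hp, hq, he⟩
  exact ⟨-n, q, p, by omega, hq, hp, he.symm⟩

theorem shiftEquiv_shift {x : LPath G} {n : ℕ} (h : x.LeLen n) : ShiftEquiv x (x.shift n) :=
  ⟨n, n, 0, by simp, h, fun i hi => by omega, (shift_zero (x.shift n)).symm⟩

theorem ShiftEquiv.trans {x y z : LPath G} (hxy : ShiftEquiv x y) (hyz : ShiftEquiv y z) :
    ShiftEquiv x z := by
  rcases hxy with ⟨n1, p, q, hn1, hp, hq, he1⟩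
  rcases hyz with ⟨n2, p', q', hn2, hp', hq', he2⟩
  set a := max q p' with ha
  have hya : y.LeLen a := fun i hi => by
    rcases Nat.lt_or_ge i q with h1 | h1
    · exact hq i h1
    · exact hp' i (by omega)
  have hxP : x.LeLen (p + (a - q)) := by
    intro i hi
    rcases Nat.lt_or_ge i p with h1 | h1
    · exact hp i h1
    · have : x.edge i = y.edge (q + (i - p)) := by
        have := congrArg (fun w => LPath.edge w (i - p)) he1
        simpa [show p + (i - p) = i by omega] using this
      rw [this]
      exact hya _ (by omega)
  have hzQ : z.LeLen (q' + (a - p')) := by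
    intro i hi
    rcases Nat.lt_or_ge i q' with h1 | h1
    · exact hq' i h1
    · have : z.edge i = y.edge (p' + (i - q')) := by
        have := congrArg (fun w => LPath.edge w (i - q')) he2.symm
        simpa [show q' + (i - q') = i by omega] using this
      rw [this]
      exact hya _ (by omega)
  refine ⟨(p + (a - q) : ℕ) - (q' + (a - p') : ℕ), p + (a - q), q' + (a - p'), rfl, hxP, hzQ, ?_⟩
  have e1 : x.shift (p + (a - q)) = (x.shift p).shift (a - q) := (shift_shift hxP).symm
  have e2 : (y.shift q).shift (a - q) = y.shift a := by
    rw [shift_shift (by simpa [show q + (a - q) = a by omega] using hya)]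
    congr 1
    omega
  have e3 : (y.shift p').shift (a - p') = y.shift a := by
    rw [shift_shift (by simpa [show p' + (a - p') = a by omega] using hya)]
    congr 1
    omega
  have e4 : z.shift (q' + (a - p')) = (z.shift q').shift (a - p') := (shift_shift hzQ).symm
  rw [e1, he1, e2, e4, ← he2, e3]

end LPath
namespace LPath

variable {G : DGraph}

theorem Infinite.of_shiftEquiv {x z : LPath G} (hx : x.Infinite) (h : ShiftEquiv z x) :
    z.Infinite := by
  rcases h with ⟨n, p, q, _, hp, _, he⟩
  intro i
  rcases Nat.lt_or_ge i p with h1 | h1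
  · exact hp i h1
  · have : z.edge i = x.edge (q + (i - p)) := by
      have := congrArg (fun w => LPath.edge w (i - p)) he
      simpa [show p + (i - p) = i by omega] using this
    rw [this]; exact hx _

theorem not_infinite_of_shiftEquiv {x z : LPath G} {m : ℕ} (hx : x.edge m = none)
    (h : ShiftEquiv z x) : ¬ z.Infinite := by
  rcases h with ⟨n, p, q, _, hp, hq, he⟩
  intro hinf
  have hqm : q ≤ m := by
    by_contra hc
    have := hq m (by omega)
    rw [hx] at this; simp at this
  have : z.edge (p + (m - q)) = x.edge (q + (m - q)) := by
    have := congrArg (fun w => LPath.edge w (m - q)) he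
    simpa using this
  rw [show q + (m - q) = m by omega, hx] at this
  have h2 := hinf (p + (m - q))
  rw [this] at h2; simp at h2

theorem Boundary.shift {x : LPath G} {n : ℕ} (h : x.Boundary) (hl : x.LeLen n) :
    (x.shift n).Boundary := by
  rcases h with hinf | ⟨m, ⟨hnone, hlt⟩, hsrc⟩
  · exact Or.inl (hinf.shift n)
  · have hnm : n ≤ m := by
      by_contra hc
      have := hl m (by omega)
      rw [hnone] at this; simp at this
    refine Or.inr ⟨m - n, ⟨?_, ?_⟩, ?_⟩
    · simpa [show n + (m - n) = m by omega] using hnone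
    · intro i hi
      simpa using hlt (n + i) (by omega)
    · rw [vert_shift (by simpa [show n + (m - n) = m by omega] using hlt)]
      rw [show n + (m - n) = m by omega]
      exact hsrc

/-- Concatenation of the first `n` edges of `y` with the path `z`. -/
def glue (y : LPath G) (n : ℕ) (z : LPath G) (hy : y.LeLen n) (hz : z.rng = y.vert n) :
    LPath G where
  rng := y.rng
  edge i := if i < n then y.edge i else z.edge (i - n)
  edge_closed := by
    intro i h
    by_cases hi : i < n
    · rw [if_pos hi] at h
      have := hy i hi
      rw [h] at this; simp at this
    · simp only [if_neg hi] at h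
      have : ¬ (i + 1 < n) := by omega
      simp only [if_neg this]
      rw [show i + 1 - n = (i - n) + 1 by omega]
      exact z.edge_closed _ h
  rng_compat := by
    intro e he
    by_cases h0 : 0 < n
    · rw [if_pos h0] at he
      exact y.rng_compat e he
    · have hn : n = 0 := by omega
      subst hn
      simp only [if_neg (by omega : ¬ (0:ℕ) < 0)] at he
      rw [z.rng_compat e he, hz]
      rfl
  compat := by
    intro i e f he hf
    rcases Nat.lt_or_ge (i+1) n with h1 | h1
    · rw [if_pos h1] at hf
      rw [if_pos (by omega)] at he
      exact y.compat i e f he hf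
    · rcases Nat.lt_or_ge i n with h2 | h2
      · -- i + 1 = n
        have hin : i + 1 = n := by omega
        rw [if_pos h2] at he
        rw [if_neg (by omega), show i + 1 - n = 0 by omega] at hf
        have h3 : G.r f = z.rng := (z.rng_compat f hf).symm ▸ rfl
        have h4 := z.rng_compat f hf
        rw [h4, hz, ← hin, vert_some he]
      · rw [if_neg (show ¬ i < n by omega)] at he
        rw [if_neg (show ¬ i + 1 < n by omega)] at hf
        rw [show i + 1 - n = (i - n) + 1 by omega] at hf
        exact z.compat (i - n) e f he hf

theorem glue_edge_lt {y z : LPath G} {n i : ℕ} {hy hz} (h : i < n) :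
    (glue y n z hy hz).edge i = y.edge i := by simp [glue, h]

theorem glue_edge_ge {y z : LPath G} {n i : ℕ} {hy hz} (h : n ≤ i) :
    (glue y n z hy hz).edge i = z.edge (i - n) := by
  simp [glue, show ¬ i < n by omega]

@[simp] theorem glue_rng {y z : LPath G} {n : ℕ} {hy hz} :
    (glue y n z hy hz).rng = y.rng := rfl

theorem glue_leLen {y z : LPath G} {n : ℕ} {hy : y.LeLen n} {hz} :
    (glue y n z hy hz).LeLen n := by
  intro i hi
  rw [glue_edge_lt hi]
  exact hy i hi

theorem glue_vert_n {y z : LPath G} {n : ℕ} {hy : y.LeLen n} {hz : z.rng = y.vert n} :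
    (glue y n z hy hz).vert n = z.rng := by
  cases n with
  | zero => exact hz.symm
  | succ m =>
    rcases Option.isSome_iff_exists.mp (hy m (Nat.lt_succ_self m)) with ⟨e, he⟩
    have h1 : (glue y (m+1) z hy hz).edge m = some e := by
      rw [glue_edge_lt (Nat.lt_succ_self m)]; exact he
    rw [vert_some h1, hz, vert_some he]

theorem glue_shift {y z : LPath G} {n : ℕ} {hy : y.LeLen n} {hz : z.rng = y.vert n} :
    (glue y n z hy hz).shift n = z := by
  refine ext'_s11 ?_ (funext fun i => ?_)
  · rw [shift_rng, glue_vert_n]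
  · rw [shift_edge, glue_edge_ge (by omega)]
    congr 1
    omega

theorem glue_infinite {y z : LPath G} {n : ℕ} {hy : y.LeLen n} {hz} (h : z.Infinite) :
    (glue y n z hy hz).Infinite := by
  intro i
  by_cases hi : i < n
  · rw [glue_edge_lt hi]; exact hy i hi
  · rw [glue_edge_ge (by omega)]; exact h _

theorem glue_boundary {y z : LPath G} {n : ℕ} {hy : y.LeLen n} {hz : z.rng = y.vert n}
    (h : z.Boundary) : (glue y n z hy hz).Boundary := by
  rcases h with hinf | ⟨m, ⟨hnone, hlt⟩, hsrc⟩
  · exact Or.inl (glue_infinite hinf)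
  · refine Or.inr ⟨n + m, ⟨?_, ?_⟩, ?_⟩
    · rw [glue_edge_ge (by omega), show n + m - n = m by omega]; exact hnone
    · intro i hi
      by_cases h2 : i < n
      · rw [glue_edge_lt h2]; exact hy i h2
      · rw [glue_edge_ge (by omega)]; exact hlt _ (by omega)
    · have hLL : (glue y n z hy hz).LeLen (n + m) := by
        intro i hi
        by_cases h2 : i < n
        · rw [glue_edge_lt h2]; exact hy i h2
        · rw [glue_edge_ge (by omega)]; exact hlt _ (by omega)
      have := vert_shift hLL
      rw [glue_shift] at this
      rw [← this]
      exact hsrc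

theorem glue_shiftEquiv {y z : LPath G} {n : ℕ} {hy : y.LeLen n} {hz : z.rng = y.vert n} :
    ShiftEquiv (glue y n z hy hz) z := by
  have h := shiftEquiv_shift (glue_leLen (hy := hy) (hz := hz))
  rwa [glue_shift] at h

end LPath
namespace LPath

variable {G : DGraph}

/-- The set of boundary paths with range `r(x)` shift equivalent to `x`. -/
def TSet (x : LPath G) : Set (LPath G) :=
  {y | y.Boundary ∧ y.rng = x.rng ∧ ShiftEquiv y x}

/-- Elements of `TSet x` extending a given finite prefix (given by `f`, up to `n`). -/
def ExtSet (x : LPath G) (f : ℕ → Option G.E) (n : ℕ) : Set (LPath G) :=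
  {z | z ∈ TSet x ∧ ∀ i, i < n → z.edge i = f i}

theorem ExtSet_anti {x : LPath G} {f g : ℕ → Option G.E} {n m : ℕ}
    (hfg : ∀ i, i < n → f i = g i) (hnm : n ≤ m) : ExtSet x g m ⊆ ExtSet x f n :=
  fun z hz => ⟨hz.1, fun i hi => (hz.2 i (lt_of_lt_of_le hi hnm)).trans (hfg i hi).symm⟩

theorem ExtSet_congr {x : LPath G} {f g : ℕ → Option G.E} {n : ℕ}
    (hfg : ∀ i, i < n → f i = g i) : ExtSet x f n = ExtSet x g n :=
  le_antisymm (ExtSet_anti (fun i hi => (hfg i hi).symm) le_rfl) (ExtSet_anti hfg le_rfl)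

theorem ExtSet_zero (x : LPath G) (f : ℕ → Option G.E) : ExtSet x f 0 = TSet x := by
  ext z; simp [ExtSet]

theorem konig_step (hrf : G.RowFinite) (x : LPath G) (f : ℕ → Option G.E) (n : ℕ)
    (hf : ∀ i, i < n → (f i).isSome) (hinf : (ExtSet x f n).Infinite) :
    ∃ z ∈ ExtSet x f n, z.LeLen (n+1) ∧ (ExtSet x z.edge (n+1)).Infinite := by
  classical
  -- the common vertex at position `n`
  have hwex : ∃ w : G.V, ∀ z ∈ ExtSet x f n, z.vert n = w := by
    cases n with
    | zero => exact ⟨x.rng, fun z hz => hz.1.2.1⟩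
    | succ m =>
      rcases Option.isSome_iff_exists.mp (hf m (Nat.lt_succ_self m)) with ⟨e, he⟩
      refine ⟨G.s e, fun z hz => ?_⟩
      have hz' : z.edge m = some e := by rw [hz.2 m (Nat.lt_succ_self m), he]
      rw [vert_some hz']
  obtain ⟨w, hvert⟩ := hwex
  have claim : ∀ z ∈ ExtSet x f n, ∀ e, z.edge n = some e → G.r e = w := by
    intro z hz e he
    rw [z.vert_eq n e he]
    exact hvert z hz
  haveI : Finite ↥{e : G.E | G.r e = w} := (hrf w).to_subtype
  haveI : Finite (Option ↥{e : G.E | G.r e = w}) :=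
    Finite.of_equiv _ (Equiv.optionEquivSumPUnit.{0,0} ↥{e : G.E | G.r e = w}).symm
  haveI : _root_.Infinite ↥(ExtSet x f n) := hinf.to_subtype
  set Φ : ↥(ExtSet x f n) → Option ↥{e : G.E | G.r e = w} := fun z =>
    Option.pmap (fun e he => (⟨e, he⟩ : ↥{e : G.E | G.r e = w})) (z.val.edge n)
      (fun e he => claim z.val z.2 e he) with hΦ
  obtain ⟨yo, hyo⟩ := Finite.exists_infinite_fiber Φ
  match yo with
  | none =>
    exfalso
    have hnone : ∀ z : ↥(ExtSet x f n), Φ z = none → z.val.edge n = none := by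
      intro z hz
      rw [hΦ] at hz
      simp only [Option.pmap_eq_none_iff] at hz
      exact hz
    haveI : Subsingleton ↥(Φ ⁻¹' {none}) := by
      constructor
      intro a b
      have ha2 : Φ a.val = none := a.2
      have hb2 : Φ b.val = none := b.2
      have ha := hnone a.val ha2
      have hb := hnone b.val hb2
      refine Subtype.ext (Subtype.ext (ext'_s11 ?_ (funext fun i => ?_)))
      · rw [a.val.2.1.2.1, b.val.2.1.2.1]
      · rcases Nat.lt_or_ge i n with h1 | h1
        · rw [a.val.2.2 i h1, b.val.2.2 i h1]
        · rw [edge_none_mono ha i h1, edge_none_mono hb i h1]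
    exact not_finite ↥(Φ ⁻¹' {none})
  | some ep =>
    have hfib : ∀ z : ↥(ExtSet x f n), Φ z = some ep → z.val.edge n = some ep.val := by
      intro z hz
      rw [hΦ] at hz
      cases hze : z.val.edge n with
      | none => simp [hze] at hz
      | some e' =>
        simp only [hze, Option.pmap_some, Option.some.injEq] at hz
        rw [← hz]
    have hIF : (Φ ⁻¹' {some ep} : Set ↥(ExtSet x f n)).Infinite := Set.infinite_coe_iff.mp hyo
    obtain ⟨z₀, hz₀mem⟩ := hIF.nonempty
    have hz₀ : z₀.val.edge n = some ep.val := hfib z₀ hz₀mem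
    refine ⟨z₀.val, z₀.2, ?_, ?_⟩
    · intro i hi
      rcases Nat.lt_or_ge i n with h1 | h1
      · rw [z₀.2.2 i h1]
        exact hf i h1
      · have h2 : i = n := by omega
        rw [h2, hz₀]; rfl
    · haveI : _root_.Infinite ↥(Φ ⁻¹' {some ep}) := hyo
      refine Set.infinite_of_injective_forall_mem
        (f := fun a : ↥(Φ ⁻¹' {some ep}) => (a.val.val : LPath G)) ?_ ?_
      · intro a b hab
        exact Subtype.ext (Subtype.ext hab)
      · intro a
        have ha : a.val.val.edge n = some ep.val := hfib a.val a.2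
        refine ⟨a.val.2.1, fun i hi => ?_⟩
        rcases Nat.lt_or_ge i n with h1 | h1
        · rw [a.val.2.2 i h1, z₀.2.2 i h1]
        · have h2 : i = n := by omega
          rw [h2, ha, hz₀]

end LPath
namespace LPath

variable {G : DGraph}

theorem konig_iter (hrf : G.RowFinite) (x : LPath G) (f : ℕ → Option G.E) (n : ℕ)
    (hf : ∀ i, i < n → (f i).isSome) (hinf : (ExtSet x f n).Infinite) (k : ℕ) :
    ∃ z ∈ ExtSet x f n, z.LeLen (n+k) ∧ (ExtSet x z.edge (n+k)).Infinite := by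
  induction k with
  | zero =>
    obtain ⟨z, hz⟩ := hinf.nonempty
    refine ⟨z, hz, ?_, ?_⟩
    · intro i hi
      rw [hz.2 i (by omega)]
      exact hf i (by omega)
    · have he : ExtSet x z.edge n = ExtSet x f n :=
        ExtSet_congr (fun i hi => hz.2 i hi)
      show (ExtSet x z.edge n).Infinite
      rw [he]
      exact hinf
  | succ k ih =>
    obtain ⟨z, hz, hzl, hzi⟩ := ih
    obtain ⟨z', hz', hzl', hzi'⟩ := konig_step hrf x z.edge (n+k) (fun i hi => hzl i hi) hzi
    exact ⟨z', ExtSet_anti (fun i hi => (hz.2 i hi).symm) (by omega) hz', hzl', hzi'⟩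

theorem limit_path (x : LPath G) (c : ℕ → LPath G) (nl : ℕ → ℕ)
    (hmem : ∀ k, c k ∈ TSet x) (hlen : ∀ k, (c k).LeLen (nl k))
    (hmono : ∀ k, nl k ≤ nl (k+1)) (hbig : ∀ k, k ≤ nl k)
    (hagree : ∀ k i, i < nl k → (c (k+1)).edge i = (c k).edge i) :
    ∃ y0 : LPath G, y0.Infinite ∧ FreqDiv y0 x ∧
      ∀ k i, i < nl k → y0.edge i = (c k).edge i := by
  have hmono' : ∀ k k', k ≤ k' → nl k ≤ nl k' := fun k k' h =>
    monotone_nat_of_le_succ hmono h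
  have hcoh : ∀ k' k, k ≤ k' → ∀ i, i < nl k → (c k').edge i = (c k).edge i := by
    intro k'
    induction k' with
    | zero =>
      intro k h i hi
      have : k = 0 := by omega
      subst this; rfl
    | succ m ih =>
      intro k h i hi
      rcases Nat.lt_or_ge k (m+1) with h1 | h1
      · have h2 : k ≤ m := by omega
        rw [hagree m i (lt_of_lt_of_le hi (hmono' k m h2)), ih k h2 i hi]
      · have : k = m + 1 := by omega
        subst this; rfl
  have hsome : ∀ i, ((c (i+1)).edge i).isSome := fun i =>
    hlen (i+1) i (lt_of_lt_of_le (Nat.lt_succ_self i) (hbig (i+1)))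
  refine ⟨⟨x.rng, fun i => (c (i+1)).edge i, ?_, ?_, ?_⟩, ?_, ?_, ?_⟩
  · intro i h
    exfalso
    have := hsome i
    rw [h] at this
    simp at this
  · intro e he
    have h1 := vert_eq (c 1) 0 e he
    rw [h1]
    exact (hmem 1).2.1
  · intro i e f he hf
    have he' : (c (i+2)).edge i = some e := by
      rw [hcoh (i+2) (i+1) (by omega) i (lt_of_lt_of_le (Nat.lt_succ_self i) (hbig (i+1)))]
      exact he
    exact (c (i+2)).compat i e f he' hf
  · intro i
    exact hsome i
  · -- FreqDiv
    intro m _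
    have hLm : (c m).LeLen m := (hlen m).mono (hbig m)
    refine ⟨(c m).shift m, Boundary.shift (hmem m).1 hLm, ?_, ?_⟩
    · rw [shift_rng]
      refine (agree_vert ?_ ?_).symm
      · exact (hmem m).2.1.symm
      · intro i hi
        show (c (i+1)).edge i = (c m).edge i
        rcases Nat.le_total (i+1) m with h1 | h1
        · exact (hcoh m (i+1) h1 i
            (lt_of_lt_of_le (Nat.lt_succ_self i) (hbig (i+1)))).symm
        · exact hcoh (i+1) m h1 i (lt_of_lt_of_le hi (hbig m))
    · exact (shiftEquiv_shift hLm).symm.trans (hmem m).2.2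
  · -- coherence with all c k
    intro k i hi
    show (c (i+1)).edge i = (c k).edge i
    rcases Nat.le_total (i+1) k with h1 | h1
    · exact (hcoh k (i+1) h1 i (lt_of_lt_of_le (Nat.lt_succ_self i) (hbig (i+1)))).symm
    · exact hcoh (i+1) k h1 i hi

end LPath
namespace LPath

variable {G : DGraph}

theorem kill_step (hrf : G.RowFinite) {x : LPath G} (hx : x.Infinite)
    (z : LPath G) (nn : ℕ) (hlen : z.LeLen nn)
    (hinf : (ExtSet x z.edge nn).Infinite) (p q : ℕ) :
    ∃ z' n', (∀ i, i < nn → z'.edge i = z.edge i) ∧ nn < n' ∧ z' ∈ TSet x ∧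
      z'.LeLen n' ∧ (ExtSet x z'.edge n').Infinite ∧
      ∃ j, p ≤ j ∧ j < n' ∧ z'.edge j ≠ x.edge (j - p + q) := by
  classical
  have hTinf : ∀ w ∈ TSet x, w.Infinite := fun w hw => hx.of_shiftEquiv hw.2.2
  set n₁ := max nn p with hn₁
  obtain ⟨z₁, hz₁, hz₁l, hz₁i⟩ :=
    konig_iter hrf x z.edge nn (fun i hi => hlen i hi) hinf (n₁ - nn)
  rw [show nn + (n₁ - nn) = n₁ by omega] at hz₁l hz₁i
  by_cases hC : ∃ z₂ ∈ ExtSet x z₁.edge n₁, ∃ n₂, n₁ < n₂ ∧ (ExtSet x z₂.edge n₂).Infinite ∧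
      ∃ j, n₁ ≤ j ∧ j < n₂ ∧ z₂.edge j ≠ x.edge (j - p + q)
  · obtain ⟨z₂, hz₂, n₂, hn₂, hz₂i, j, hj1, hj2, hj3⟩ := hC
    refine ⟨z₂, n₂, ?_, by omega, hz₂.1, (hTinf z₂ hz₂.1).leLen n₂, hz₂i, j, by omega, hj2, hj3⟩
    intro i hi
    rw [hz₂.2 i (by omega), hz₁.2 i hi]
  · exfalso
    push_neg at hC
    set F : ℕ → Option G.E := fun i => if i < n₁ then z₁.edge i else x.edge (i - p + q) with hF
    have hFs : ∀ i, (F i).isSome := by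
      intro i
      by_cases h2 : i < n₁
      · simp only [hF, if_pos h2]; exact hz₁l i h2
      · simp only [hF, if_neg h2]; exact hx _
    have hFagree : ∀ i, i < n₁ → F i = z₁.edge i := fun i hi => by simp [hF, if_pos hi]
    have hFge : ∀ i, n₁ ≤ i → F i = x.edge (i - p + q) := fun i hi => by
      simp [hF, show ¬ i < n₁ by omega]
    have hD : ∀ k, (ExtSet x F (n₁ + k)).Infinite := by
      intro k
      induction k with
      | zero =>
        show (ExtSet x F n₁).Infinite
        rw [ExtSet_congr hFagree]
        exact hz₁i
      | succ k ih =>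
        obtain ⟨z₂, hz₂, hz₂l, hz₂i⟩ := konig_step hrf x F (n₁ + k) (fun i _ => hFs i) ih
        have hz₂x : z₂ ∈ ExtSet x z₁.edge n₁ :=
          ExtSet_anti (fun i hi => (hFagree i hi).symm) (by omega) hz₂
        have hforced : z₂.edge (n₁ + k) = x.edge (n₁ + k - p + q) :=
          hC z₂ hz₂x (n₁+k+1) (by omega) hz₂i (n₁+k) (by omega) (by omega)
        have heq : ExtSet x z₂.edge (n₁ + k + 1) = ExtSet x F (n₁ + k + 1) := by
          apply ExtSet_congr
          intro i hi
          rcases Nat.lt_or_ge i (n₁ + k) with h1 | h1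
          · exact hz₂.2 i h1
          · have h2 : i = n₁ + k := by omega
            subst h2
            rw [hforced, hFge _ (by omega)]
        rwa [heq] at hz₂i
    -- deviations exist at arbitrarily large positions
    have hDev : ∀ K, ∃ j, n₁ + K ≤ j ∧ ∃ w ∈ ExtSet x F j, w.edge j ≠ F j := by
      intro K
      obtain ⟨w1, hw1, w2, hw2, hne⟩ := (hD K).nontrivial
      have hex : ∃ w ∈ ExtSet x F (n₁+K), ∃ i, w.edge i ≠ F i := by
        by_contra hall
        push_neg at hall
        apply hne
        refine ext'_s11 ?_ (funext fun i => ?_)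
        · rw [hw1.1.2.1, hw2.1.2.1]
        · rw [hall w1 hw1 i, hall w2 hw2 i]
      obtain ⟨w, hw, hex2⟩ := hex
      haveI : DecidablePred fun i => w.edge i ≠ F i := fun _ => Classical.dec _
      have hj := Nat.find_spec hex2
      have hjmin : ∀ i, i < Nat.find hex2 → w.edge i = F i := fun i hi =>
        not_not.mp (Nat.find_min hex2 hi)
      have hjge : n₁ + K ≤ Nat.find hex2 := by
        by_contra hcl
        exact hj (hw.2 _ (by omega))
      exact ⟨Nat.find hex2, hjge, w, ⟨hw.1, fun i hi => hjmin i hi⟩, hj⟩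
    -- the common vertex along the forced ray
    have hJV : ∀ j, n₁ ≤ j → ∀ w ∈ ExtSet x F j, w.vert j = x.vert (j - p + q) := by
      intro j hj w hw
      have hDj := hD (j + 1 - n₁)
      rw [show n₁ + (j + 1 - n₁) = j + 1 by omega] at hDj
      obtain ⟨u, hu⟩ := hDj.nonempty
      obtain ⟨xe, hxe⟩ := Option.isSome_iff_exists.mp (hx (j - p + q))
      have huj : u.edge j = some xe := by
        rw [hu.2 j (by omega), hFge j hj, hxe]
      have h1 : w.vert j = u.vert j :=
        agree_vert (by rw [hw.1.2.1, hu.1.2.1]) (fun i hi => by rw [hw.2 i hi, ← hu.2 i (by omega)])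
      rw [h1, ← vert_eq u j xe huj]
      exact vert_eq x _ xe hxe
    -- the first deviation gives a finite extension set
    obtain ⟨j₁, hj₁ge, w₁, hw₁, hw₁ne⟩ := hDev 0
    have hj₁n₁ : n₁ ≤ j₁ := by omega
    have hw₁T : w₁ ∈ TSet x := hw₁.1
    have hw₁inf : w₁.Infinite := hTinf w₁ hw₁T
    have hFin : ¬ (ExtSet x w₁.edge (j₁+1)).Infinite := by
      intro hcon
      apply hw₁ne
      rw [hFge j₁ hj₁n₁]
      exact hC w₁ (ExtSet_anti (fun i hi => (hFagree i hi).symm) hj₁n₁ hw₁) (j₁+1) (by omega)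
        hcon j₁ hj₁n₁ (by omega)
    obtain ⟨lag, p₁, q₁, -, -, -, hE₁⟩ := hw₁T.2.2
    set P₁ := max p₁ (j₁+1) with hP₁
    set Q₁ := q₁ + (P₁ - p₁) with hQ₁
    have hshift : w₁.shift P₁ = x.shift Q₁ := by
      have e1 : w₁.shift P₁ = (w₁.shift p₁).shift (P₁ - p₁) := by
        rw [shift_shift (hw₁inf.leLen _)]
        congr 1
        omega
      rw [e1, hE₁, shift_shift (hx.leLen _)]
    choose jD hjD wD hwD hneD using hDev
    -- strictly increasing sequence of deviation positions beyond Q₁ + p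
    let KS : ℕ → ℕ := fun t => Nat.rec (Q₁ + p + 1) (fun _ prev => jD prev + 1) t
    have hKS0 : KS 0 = Q₁ + p + 1 := rfl
    have hKSs : ∀ t, KS (t+1) = jD (KS t) + 1 := fun t => rfl
    have hKlow : ∀ t, Q₁ + p + 1 ≤ KS t := by
      intro t
      induction t with
      | zero => exact le_of_eq hKS0.symm
      | succ t ih =>
        rw [hKSs t]
        have := hjD (KS t)
        omega
    have hJn₁ : ∀ t, n₁ ≤ jD (KS t) := fun t => by have := hjD (KS t); omega
    have hJge : ∀ t, Q₁ + p + 1 ≤ jD (KS t) := fun t => by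
      have h1 := hjD (KS t); have h2 := hKlow t; omega
    have hJsm : StrictMono (fun t => jD (KS t)) := by
      apply strictMono_nat_of_lt_succ
      intro t
      show jD (KS t) < jD (KS (t+1))
      have h1 := hjD (KS (t+1))
      rw [hKSs t] at h1 ⊢
      omega
    -- glued paths
    have hyp1 : ∀ t : ℕ, (x.shift Q₁).LeLen (jD (KS t) - p + q - Q₁) :=
      fun t => (hx.shift Q₁).leLen _
    have hyp2 : ∀ t : ℕ, ((wD (KS t)).shift (jD (KS t))).rng
        = (x.shift Q₁).vert (jD (KS t) - p + q - Q₁) := by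
      intro t
      have h1 : (wD (KS t)).vert (jD (KS t)) = x.vert (jD (KS t) - p + q) :=
        hJV (jD (KS t)) (hJn₁ t) (wD (KS t)) (hwD (KS t))
      rw [shift_rng, h1, vert_shift (hx.leLen (Q₁ + (jD (KS t) - p + q - Q₁)))]
      congr 1
      have := hJge t
      omega
    have hyp3 : w₁.LeLen P₁ := hw₁inf.leLen _
    have hyp4 : ∀ t : ℕ, (glue (x.shift Q₁) (jD (KS t) - p + q - Q₁)
        ((wD (KS t)).shift (jD (KS t))) (hyp1 t) (hyp2 t)).rng = w₁.vert P₁ := by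
      intro t
      show (x.shift Q₁).rng = w₁.vert P₁
      rw [← hshift]
      rfl
    set gg : ℕ → LPath G := fun t => glue w₁ P₁
      (glue (x.shift Q₁) (jD (KS t) - p + q - Q₁)
        ((wD (KS t)).shift (jD (KS t))) (hyp1 t) (hyp2 t)) hyp3 (hyp4 t) with hgg
    have hwDinf : ∀ t : ℕ, (wD (KS t)).Infinite := fun t => hTinf _ (hwD (KS t)).1
    have hgg_inf : ∀ t, (gg t).Infinite :=
      fun t => glue_infinite (glue_infinite ((hwDinf t).shift _))
    have hgg_mem : ∀ t, gg t ∈ ExtSet x w₁.edge (j₁ + 1) := by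
      intro t
      refine ⟨⟨Or.inl (hgg_inf t), ?_, ?_⟩, ?_⟩
      · show w₁.rng = x.rng
        exact hw₁T.2.1
      · have h1 : ShiftEquiv (gg t) (glue (x.shift Q₁) (jD (KS t) - p + q - Q₁)
            ((wD (KS t)).shift (jD (KS t))) (hyp1 t) (hyp2 t)) := glue_shiftEquiv
        have h2 : ShiftEquiv (glue (x.shift Q₁) (jD (KS t) - p + q - Q₁)
            ((wD (KS t)).shift (jD (KS t))) (hyp1 t) (hyp2 t))
            ((wD (KS t)).shift (jD (KS t))) := glue_shiftEquiv
        have h3 : ShiftEquiv (wD (KS t)) ((wD (KS t)).shift (jD (KS t))) :=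
          shiftEquiv_shift ((hwDinf t).leLen _)
        exact h1.trans (h2.trans (h3.symm.trans (hwD (KS t)).1.2.2))
      · intro i hi
        rw [hgg]
        rw [glue_edge_lt (show i < P₁ by omega)]
    have hpos : ∀ t, (gg t).edge (P₁ + (jD (KS t) - p + q - Q₁))
        = (wD (KS t)).edge (jD (KS t)) := by
      intro t
      rw [hgg]
      rw [glue_edge_ge (by omega), show P₁ + (jD (KS t) - p + q - Q₁) - P₁
        = jD (KS t) - p + q - Q₁ by omega, glue_edge_ge (le_refl _), Nat.sub_self]
      show (wD (KS t)).edge (jD (KS t) + 0) = _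
      rw [Nat.add_zero]
    have hposlt : ∀ t t', t < t' → (gg t').edge (P₁ + (jD (KS t) - p + q - Q₁))
        = x.edge (jD (KS t) - p + q) := by
      intro t t' h
      have hj1 := hJge t
      have hj2 := hJge t'
      have hjlt : jD (KS t) < jD (KS t') := hJsm h
      rw [hgg]
      rw [glue_edge_ge (by omega), show P₁ + (jD (KS t) - p + q - Q₁) - P₁
        = jD (KS t) - p + q - Q₁ by omega,
        glue_edge_lt (show jD (KS t) - p + q - Q₁ < jD (KS t') - p + q - Q₁ by omega),
        shift_edge, show Q₁ + (jD (KS t) - p + q - Q₁) = jD (KS t) - p + q by omega]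
    have hdev_ne : ∀ t, (wD (KS t)).edge (jD (KS t)) ≠ x.edge (jD (KS t) - p + q) := by
      intro t hcon
      apply hneD (KS t)
      rw [hcon, hFge _ (hJn₁ t)]
    have hgg_inj : Function.Injective gg := by
      intro t t' h
      by_contra hne2
      rcases Nat.lt_or_ge t t' with h1 | h1
      · have e1 := hpos t
        rw [h, hposlt t t' h1] at e1
        exact hdev_ne t e1.symm
      · have h2 : t' < t := by omega
        have e1 := hpos t'
        rw [← h, hposlt t' t h2] at e1
        exact hdev_ne t' e1.symm
    exact hFin (Set.infinite_of_injective_forall_mem hgg_inj hgg_mem)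

end LPath
namespace LPath

variable {G : DGraph}

theorem exists_bad_path_B (hrf : G.RowFinite) {x : LPath G} (hxinf : x.Infinite)
    (hT : (TSet x).Infinite) :
    ∃ y0 : LPath G, y0.Infinite ∧ FreqDiv y0 x ∧ ¬ ShiftEquiv y0 x := by
  classical
  have hxb : x.Boundary := Or.inl hxinf
  set P : LPath G × ℕ → Prop :=
    fun s => s.1 ∈ TSet x ∧ s.1.LeLen s.2 ∧ (ExtSet x s.1.edge s.2).Infinite with hP
  have hstep : ∀ (k : ℕ) (s : LPath G × ℕ), ∃ s' : LPath G × ℕ, P s →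
      ((∀ i, i < s.2 → s'.1.edge i = s.1.edge i) ∧ s.2 < s'.2 ∧ P s' ∧
       ∃ j, (Nat.unpair k).1 ≤ j ∧ j < s'.2 ∧
         s'.1.edge j ≠ x.edge (j - (Nat.unpair k).1 + (Nat.unpair k).2)) := by
    intro k s
    by_cases hs : P s
    · obtain ⟨z', n', ha, hb, hc, hd, he, hj⟩ :=
        kill_step hrf hxinf s.1 s.2 hs.2.1 hs.2.2 (Nat.unpair k).1 (Nat.unpair k).2
      exact ⟨(z', n'), fun _ => ⟨ha, hb, ⟨hc, hd, he⟩, hj⟩⟩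
    · exact ⟨s, fun h => absurd h hs⟩
  choose f hf using hstep
  set c : ℕ → LPath G × ℕ := fun n => Nat.rec (x, 0) (fun k prev => f k prev) n with hc
  have hcs : ∀ k, c (k+1) = f k (c k) := fun _ => rfl
  have hPc : ∀ k, P (c k) := by
    intro k
    induction k with
    | zero =>
      show P (x, 0)
      refine ⟨⟨hxb, rfl, ShiftEquiv.refl x⟩, fun i hi => by omega, ?_⟩
      show (ExtSet x x.edge 0).Infinite
      rw [ExtSet_zero]
      exact hT
    | succ k ih =>
      rw [hcs k]
      exact ((hf k (c k)) ih).2.2.1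
  have hQ : ∀ k, (∀ i, i < (c k).2 → (c (k+1)).1.edge i = (c k).1.edge i) ∧
      (c k).2 < (c (k+1)).2 ∧ P (c (k+1)) ∧
      ∃ j, (Nat.unpair k).1 ≤ j ∧ j < (c (k+1)).2 ∧
        (c (k+1)).1.edge j ≠ x.edge (j - (Nat.unpair k).1 + (Nat.unpair k).2) := by
    intro k
    rw [hcs k]
    exact hf k (c k) (hPc k)
  have hbig : ∀ k, k ≤ (c k).2 := by
    intro k
    induction k with
    | zero => omega
    | succ k ih =>
      have := (hQ k).2.1
      omega
  obtain ⟨y0, hy0inf, hy0fd, hy0coh⟩ := limit_path x (fun k => (c k).1) (fun k => (c k).2)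
    (fun k => (hPc k).1) (fun k => (hPc k).2.1) (fun k => le_of_lt (hQ k).2.1) hbig
    (fun k i hi => (hQ k).1 i hi)
  refine ⟨y0, hy0inf, hy0fd, ?_⟩
  rintro ⟨lag, pp, qq, -, -, -, hE⟩
  obtain ⟨j, hj1, hj2, hjne⟩ := (hQ (Nat.pair pp qq)).2.2.2
  rw [Nat.unpair_pair] at hj1 hjne
  apply hjne
  have h1 : y0.edge j = (c (Nat.pair pp qq + 1)).1.edge j := hy0coh (Nat.pair pp qq + 1) j hj2
  have h2 := congrArg (fun w => LPath.edge w (j - pp)) hE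
  rw [shift_edge, shift_edge] at h2
  rw [show pp + (j - pp) = j by omega, show qq + (j - pp) = j - pp + qq by omega] at h2
  rw [← h1]
  exact h2

theorem exists_bad_path_A (hrf : G.RowFinite) {x : LPath G} (hxb : x.Boundary)
    {m : ℕ} (hfin : x.edge m = none) (hT : (TSet x).Infinite) :
    ∃ y0 : LPath G, y0.Infinite ∧ FreqDiv y0 x ∧ ¬ ShiftEquiv y0 x := by
  classical
  set P : ℕ → LPath G → Prop :=
    fun k z => z ∈ TSet x ∧ z.LeLen k ∧ (ExtSet x z.edge k).Infinite with hP
  have hstep : ∀ (k : ℕ) (z : LPath G), ∃ z' : LPath G, P k z →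
      ((∀ i, i < k → z'.edge i = z.edge i) ∧ P (k+1) z') := by
    intro k z
    by_cases hs : P k z
    · obtain ⟨z', hz', hl', hi'⟩ := konig_step hrf x z.edge k (fun i hi => hs.2.1 i hi) hs.2.2
      exact ⟨z', fun _ => ⟨fun i hi => hz'.2 i hi, hz'.1, hl', hi'⟩⟩
    · exact ⟨z, fun h => absurd h hs⟩
  choose f hf using hstep
  set c : ℕ → LPath G := fun n => Nat.rec x (fun k prev => f k prev) n with hc
  have hcs : ∀ k, c (k+1) = f k (c k) := fun _ => rfl
  have hPc : ∀ k, P k (c k) := by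
    intro k
    induction k with
    | zero =>
      show P 0 x
      refine ⟨⟨hxb, rfl, ShiftEquiv.refl x⟩, fun i hi => by omega, ?_⟩
      show (ExtSet x x.edge 0).Infinite
      rw [ExtSet_zero]
      exact hT
    | succ k ih =>
      rw [hcs k]
      exact ((hf k (c k)) ih).2
  obtain ⟨y0, hy0inf, hy0fd, -⟩ := limit_path x c (fun k => k)
    (fun k => (hPc k).1) (fun k => (hPc k).2.1) (fun k => Nat.le_succ k) (fun k => le_refl k)
    (fun k i hi => by rw [hcs k]; exact (hf k (c k) (hPc k)).1 i hi)
  exact ⟨y0, hy0inf, hy0fd, fun hse => not_infinite_of_shiftEquiv hfin hse hy0inf⟩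

end LPath
/-- For a row-finite directed graph `E`, the following are equivalent:
(1) for every `x ∈ E^{≤∞}`, every path in `E^∞` that is frequently divertable to `[x]`
is shift equivalent to `x`; (2) for every `x ∈ E^{≤∞}`, there are only finitely many
paths in `r(x)E^{≤∞}` that are shift equivalent to `x`. -/
theorem stmt11 (G : DGraph) (hrf : G.RowFinite) :
    (∀ x : LPath G, x.Boundary → ∀ y : LPath G, y.Infinite →
      LPath.FreqDiv y x → LPath.ShiftEquiv y x) ↔
    (∀ x : LPath G, x.Boundary →
      {y : LPath G | y.Boundary ∧ y.rng = x.rng ∧ LPath.ShiftEquiv y x}.Finite) := by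
  constructor
  · -- (1) → (2)
    intro h1 x hxb
    by_contra hfin
    have hT : (LPath.TSet x).Infinite := hfin
    rcases hxb with hxinf | ⟨m, hm, hsrc⟩
    · obtain ⟨y0, hi, hfd, hns⟩ := LPath.exists_bad_path_B hrf hxinf hT
      exact hns (h1 x (Or.inl hxinf) y0 hi hfd)
    · obtain ⟨y0, hi, hfd, hns⟩ :=
        LPath.exists_bad_path_A hrf (Or.inr ⟨m, hm, hsrc⟩) hm.1 hT
      exact hns (h1 x (Or.inr ⟨m, hm, hsrc⟩) y0 hi hfd)
  · -- (2) → (1)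
    intro h2 x hxb y hyinf hfd
    classical
    choose Z hZb hZr hZe using fun n => hfd n (hyinf.leLen n)
    set w : ℕ → LPath G := fun n => LPath.glue y n (Z n) (hyinf.leLen n) (hZr n) with hw
    have hwb : ∀ n, (w n).Boundary := fun n => LPath.glue_boundary (hZb n)
    have hwr : ∀ n, (w n).rng = y.rng := fun n => rfl
    have hwe : ∀ n, LPath.ShiftEquiv (w n) x := fun n =>
      LPath.glue_shiftEquiv.trans (hZe n)
    set S : Set (LPath G) := {y' : LPath G | y'.Boundary ∧ y'.rng = (w 0).rng ∧
        LPath.ShiftEquiv y' (w 0)} with hSdef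
    have hS : S.Finite := h2 (w 0) (hwb 0)
    have hmem : ∀ n, w n ∈ S := fun n =>
      ⟨hwb n, rfl, (hwe n).trans (hwe 0).symm⟩
    haveI := hS.to_subtype
    set Φ : ℕ → ↥S := fun n => ⟨w n, hmem n⟩ with hΦ
    obtain ⟨ys, hys⟩ := Finite.exists_infinite_fiber Φ
    have hfibinf : (Φ ⁻¹' {ys} : Set ℕ).Infinite :=
      Set.infinite_coe_iff.mp hys
    have heq : y = ys.val := by
      refine LPath.ext'_s11 ?_ (funext fun i => ?_)
      · exact (ys.2.2.1).symm
      · obtain ⟨n, hn, hni⟩ := hfibinf.exists_gt i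
        have h3 : w n = ys.val := congrArg Subtype.val (hn : Φ n = ys)
        rw [← h3, LPath.glue_edge_lt hni]
    obtain ⟨n0, hn0⟩ := hfibinf.nonempty
    have h4 : y = w n0 := heq.trans (congrArg Subtype.val (hn0 : Φ n0 = ys)).symm
    rw [h4]
    exact hwe n0
end

section
/- Let E be a directed graph. Suppose that for every x ∈ E^∞ there exists n ∈ ℕ such that every path in x(n)E^∞ that is frequently divertable to [x] is shift equivalent to x. Then no entry to a cycle in E is itself in a cycle. -/
section Aux

variable {G : DGraph}

theorem lpath_ext {x y : LPath G} (h1 : x.rng = y.rng) (h2 : x.edge = y.edge) : x = y := by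
  cases x; cases y
  cases h1; cases h2
  rfl

theorem shift_zero (x : LPath G) : x.shift 0 = x :=
  lpath_ext rfl (funext fun i => by simp [LPath.shift])

theorem inf_leLen {x : LPath G} (hx : x.Infinite) (n : ℕ) : x.LeLen n := fun i _ => hx i

theorem cyc_compat (c : DCycle G) (m : ℕ) :
    G.s (c.edge (m % c.len)) = G.r (c.edge ((m + 1) % c.len)) := by
  have hL := c.len_pos
  have hm : m % c.len < c.len := Nat.mod_lt m hL
  rw [← Nat.mod_add_mod]
  rcases Nat.lt_or_ge (m % c.len + 1) c.len with h1 | h1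
  · rw [Nat.mod_eq_of_lt h1]
    exact c.compat _ h1
  · have h2 : m % c.len + 1 = c.len := by omega
    rw [h2, Nat.mod_self]
    have h3 : m % c.len = c.len - 1 := by omega
    rw [h3]
    exact c.closed

/-- The infinite path winding around the cycle `c`, starting at offset `t`. -/
def rep (c : DCycle G) (t : ℕ) : LPath G where
  rng := G.r (c.edge (t % c.len))
  edge i := some (c.edge ((t + i) % c.len))
  edge_closed i h := by simp at h
  rng_compat e he := by
    rw [Option.some_inj] at he
    rw [← he, Nat.add_zero]
  compat i e f he hf := by
    rw [Option.some_inj] at he hf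
    rw [← he, ← hf]
    exact cyc_compat c (t + i)

theorem rep_edge (c : DCycle G) (t i : ℕ) :
    (rep c t).edge i = some (c.edge ((t + i) % c.len)) := rfl

theorem rep_inf (c : DCycle G) (t : ℕ) : (rep c t).Infinite := fun _ => rfl

theorem rep_vert (c : DCycle G) (t k : ℕ) :
    (rep c t).vert k = G.r (c.edge ((t + k) % c.len)) := by
  cases k with
  | zero => rfl
  | succ k =>
    show G.s (c.edge ((t + k) % c.len)) = _
    exact cyc_compat c (t + k)

theorem rep_shift (c : DCycle G) (t m : ℕ) : (rep c t).shift m = rep c (t + m) :=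
  lpath_ext (rep_vert c t m) (funext fun i => by
    show (rep c t).edge (m + i) = _
    rw [rep_edge, rep_edge, ← Nat.add_assoc])

theorem rep_congr (c : DCycle G) {t t' : ℕ} (h : t % c.len = t' % c.len) :
    rep c t = rep c t' :=
  lpath_ext (by show G.r _ = G.r _; rw [h])
    (funext fun i => by rw [rep_edge, rep_edge, ← Nat.mod_add_mod, h, Nat.mod_add_mod])

theorem rep_shiftEquiv (c : DCycle G) (u u' : ℕ) :
    LPath.ShiftEquiv (rep c u) (rep c u') :=
  ⟨(u' : ℤ) - u, u', u, rfl, inf_leLen (rep_inf c u) _, inf_leLen (rep_inf c u') _, by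
    rw [rep_shift, rep_shift, Nat.add_comm]⟩

/-- The infinite path following cycle `c` from offset `t` for `a` steps, then winding
around cycle `c'` from offset `j`. -/
def glue (c c' : DCycle G) (t j a : ℕ) (ha : 1 ≤ a)
    (hg : G.r (c.edge ((t + a) % c.len)) = G.r (c'.edge (j % c'.len))) : LPath G where
  rng := G.r (c.edge (t % c.len))
  edge m := some (if m < a then c.edge ((t + m) % c.len) else c'.edge ((j + (m - a)) % c'.len))
  edge_closed i hh := by simp at hh
  rng_compat e he := by
    rw [Option.some_inj, if_pos (by omega : 0 < a)] at he
    rw [← he, Nat.add_zero]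
  compat m e f' he hf := by
    rw [Option.some_inj] at he hf
    rw [← he, ← hf]
    rcases Nat.lt_or_ge (m + 1) a with h1 | h1
    · rw [if_pos (by omega : m < a), if_pos h1]
      exact cyc_compat c (t + m)
    · rcases Nat.eq_or_lt_of_le h1 with h2 | h2
      · rw [if_pos (by omega : m < a), if_neg (by omega : ¬ m + 1 < a)]
        have h3 : j + (m + 1 - a) = j := by omega
        rw [h3]
        have h4 := cyc_compat c (t + m)
        rw [show t + m + 1 = t + a by omega] at h4
        rw [h4]
        exact hg
      · rw [if_neg (by omega : ¬ m < a), if_neg (by omega : ¬ m + 1 < a)]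
        have h3 : j + (m + 1 - a) = (j + (m - a)) + 1 := by omega
        rw [h3]
        exact cyc_compat c' (j + (m - a))

theorem glue_edge (c c' : DCycle G) (t j a : ℕ) (ha : 1 ≤ a)
    (hg : G.r (c.edge ((t + a) % c.len)) = G.r (c'.edge (j % c'.len))) (m : ℕ) :
    (glue c c' t j a ha hg).edge m =
      some (if m < a then c.edge ((t + m) % c.len) else c'.edge ((j + (m - a)) % c'.len)) := rfl

theorem glue_inf (c c' : DCycle G) (t j a : ℕ) (ha : 1 ≤ a)
    (hg : G.r (c.edge ((t + a) % c.len)) = G.r (c'.edge (j % c'.len))) :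
    (glue c c' t j a ha hg).Infinite := fun _ => rfl

theorem glue_vert_le (c c' : DCycle G) (t j a : ℕ) (ha : 1 ≤ a)
    (hg : G.r (c.edge ((t + a) % c.len)) = G.r (c'.edge (j % c'.len))) {m : ℕ} (hm : m ≤ a) :
    (glue c c' t j a ha hg).vert m = G.r (c.edge ((t + m) % c.len)) := by
  cases m with
  | zero => rfl
  | succ m =>
    show G.s (if m < a then _ else _) = _
    rw [if_pos (by omega : m < a)]
    exact cyc_compat c (t + m)

theorem glue_vert_ge (c c' : DCycle G) (t j a : ℕ) (ha : 1 ≤ a)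
    (hg : G.r (c.edge ((t + a) % c.len)) = G.r (c'.edge (j % c'.len))) {m : ℕ} (hm : a ≤ m) :
    (glue c c' t j a ha hg).vert m = G.r (c'.edge ((j + (m - a)) % c'.len)) := by
  cases m with
  | zero => omega
  | succ m =>
    show G.s (if m < a then _ else _) = _
    rcases Nat.eq_or_lt_of_le hm with h2 | h2
    · rw [if_pos (by omega : m < a)]
      have h4 := cyc_compat c (t + m)
      rw [show t + m + 1 = t + a by omega] at h4
      rw [h4, show m + 1 - a = 0 by omega, Nat.add_zero]
      exact hg
    · rw [if_neg (by omega : ¬ m < a)]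
      have h3 : j + (m + 1 - a) = (j + (m - a)) + 1 := by omega
      rw [h3]
      exact cyc_compat c' (j + (m - a))

theorem glue_shift (c c' : DCycle G) (t j a : ℕ) (ha : 1 ≤ a)
    (hg : G.r (c.edge ((t + a) % c.len)) = G.r (c'.edge (j % c'.len))) :
    (glue c c' t j a ha hg).shift a = rep c' j := by
  refine lpath_ext ?_ (funext fun i => ?_)
  · show (glue c c' t j a ha hg).vert a = G.r (c'.edge (j % c'.len))
    rw [glue_vert_ge c c' t j a ha hg le_rfl, Nat.sub_self, Nat.add_zero]
  · show (glue c c' t j a ha hg).edge (a + i) = (rep c' j).edge i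
    rw [glue_edge, rep_edge, if_neg (by omega : ¬ a + i < a),
      show a + i - a = i by omega]

theorem mod_compl (L n : ℕ) (hL : 0 < L) : ∃ k, n + (L - n % L) = L * k := by
  refine ⟨n / L + 1, ?_⟩
  have h1 := Nat.div_add_mod n L
  have h2 := Nat.mod_lt n hL
  rw [Nat.mul_add, Nat.mul_one]
  omega

theorem cyc_r_inj (c : DCycle G) {m m' : ℕ} (hm : m < c.len) (hm' : m' < c.len)
    (h : G.r (c.edge m) = G.r (c.edge m')) : m = m' := by
  have hL := c.len_pos
  have key : ∀ u, u < c.len → G.r (c.edge u) = G.s (c.edge ((u + c.len - 1) % c.len)) := by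
    intro u hu
    have h1 := cyc_compat c (u + c.len - 1)
    rw [show u + c.len - 1 + 1 = u + c.len by omega, Nat.add_mod_right,
      Nat.mod_eq_of_lt hu] at h1
    exact h1.symm
  rw [key m hm, key m' hm'] at h
  have h2 := c.distinct _ _ (Nat.mod_lt _ hL) (Nat.mod_lt _ hL) h
  have key2 : ∀ u, u < c.len → ((u + c.len - 1) % c.len + 1) % c.len = u := by
    intro u hu
    rw [Nat.mod_add_mod, show u + c.len - 1 + 1 = u + c.len by omega, Nat.add_mod_right,
      Nat.mod_eq_of_lt hu]
  rw [← key2 m hm, ← key2 m' hm', h2]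

end Aux

/-- Let `E` be a directed graph such that for every `x ∈ E^∞` there is `n ∈ ℕ` such
that every path in `x(n)E^∞` that is frequently divertable to `[x]` is shift
equivalent to `x`.  Then no entry to a cycle of `E` is itself in a cycle. -/
theorem stmt15 (G : DGraph)
    (h : ∀ x : LPath G, x.Infinite → ∃ n : ℕ, ∀ y : LPath G, y.Infinite →
      y.rng = x.vert n → LPath.FreqDiv y x → LPath.ShiftEquiv y x) :
    ∀ c : DCycle G, ∀ f : G.E, c.IsEntry f → ∀ c' : DCycle G, ¬ c'.EdgeMem f := by
  rintro c f ⟨i, hi, hrf, hne⟩ c' ⟨j, hj, hjf⟩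
  have hL := c.len_pos
  have hL' := c'.len_pos
  obtain ⟨n, H⟩ := h (rep c i) (rep_inf c i)
  have ha : 1 ≤ c.len - n % c.len := by have := Nat.mod_lt n hL; omega
  obtain ⟨ka, hka⟩ := mod_compl c.len n hL
  have hg1 : G.r (c.edge ((i + n + (c.len - n % c.len)) % c.len)) = G.r (c'.edge (j % c'.len)) := by
    rw [show i + n + (c.len - n % c.len) = i + c.len * ka by omega,
      Nat.add_mul_mod_self_left, Nat.mod_eq_of_lt hi, Nat.mod_eq_of_lt hj, hjf]
    exact hrf.symm
  have hyinf := glue_inf c c' (i + n) j _ ha hg1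
  have hyrng : (glue c c' (i + n) j _ ha hg1).rng = (rep c i).vert n := by
    rw [rep_vert]; rfl
  have hfd : (glue c c' (i + n) j _ ha hg1).FreqDiv (rep c i) := by
    intro m _
    rcases Nat.lt_or_ge m (c.len - n % c.len) with hm | hm
    · refine ⟨rep c (i + n + m), Or.inl (rep_inf _ _), ?_, rep_shiftEquiv c _ i⟩
      rw [glue_vert_le c c' (i + n) j _ ha hg1 (Nat.le_of_lt hm)]
      rfl
    · obtain ⟨kb, hkb⟩ := mod_compl c'.len (m - (c.len - n % c.len)) hL'
      have hb : 1 ≤ c'.len - (m - (c.len - n % c.len)) % c'.len := by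
        have := Nat.mod_lt (m - (c.len - n % c.len)) hL'; omega
      have hg2 : G.r (c'.edge ((j + (m - (c.len - n % c.len)) +
          (c'.len - (m - (c.len - n % c.len)) % c'.len)) % c'.len)) = G.r (c.edge (i % c.len)) := by
        rw [show j + (m - (c.len - n % c.len)) + (c'.len - (m - (c.len - n % c.len)) % c'.len)
            = j + c'.len * kb by omega,
          Nat.add_mul_mod_self_left, Nat.mod_eq_of_lt hj, Nat.mod_eq_of_lt hi, hjf]
        exact hrf
      refine ⟨glue c' c (j + (m - (c.len - n % c.len))) i _ hb hg2,
        Or.inl (glue_inf _ _ _ _ _ _ _), ?_, ?_⟩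
      · rw [glue_vert_ge c c' (i + n) j _ ha hg1 hm]
        rfl
      · exact ⟨(c'.len - (m - (c.len - n % c.len)) % c'.len : ℕ),
          c'.len - (m - (c.len - n % c.len)) % c'.len, 0, by simp,
          inf_leLen (glue_inf _ _ _ _ _ _ _) _, inf_leLen (rep_inf _ _) _, by
            rw [glue_shift, shift_zero]⟩
  obtain ⟨lag, p, q, -, -, -, heq⟩ := H _ hyinf hyrng hfd
  have hk : ∀ k, (glue c c' (i + n) j _ ha hg1).edge (p + k) = (rep c i).edge (q + k) :=
    fun k => congrFun (congrArg LPath.edge heq) k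
  have hLM : p + q + (c.len - n % c.len) + 1 ≤ c.len * (p + q + (c.len - n % c.len) + 1) :=
    Nat.le_mul_of_pos_left _ hL
  have hqk : q + (c.len * (p + q + (c.len - n % c.len) + 1) - q)
      = c.len * (p + q + (c.len - n % c.len) + 1) := by omega
  have hpk : c.len - n % c.len ≤ p + (c.len * (p + q + (c.len - n % c.len) + 1) - q) := by omega
  have he := hk (c.len * (p + q + (c.len - n % c.len) + 1) - q)
  rw [glue_edge, if_neg (by omega : ¬ p + (c.len * (p + q + (c.len - n % c.len) + 1) - q)
      < c.len - n % c.len), rep_edge, hqk, Nat.add_mul_mod_self_left,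
    Nat.mod_eq_of_lt hi, Option.some_inj] at he
  have hK : (j + (p + (c.len * (p + q + (c.len - n % c.len) + 1) - q) - (c.len - n % c.len)))
      % c'.len < c'.len := Nat.mod_lt _ hL'
  have hrr : G.r (c'.edge ((j + (p + (c.len * (p + q + (c.len - n % c.len) + 1) - q)
      - (c.len - n % c.len))) % c'.len)) = G.r (c'.edge j) := by
    rw [he, hjf]
    exact hrf.symm
  have hKj := cyc_r_inj c' hK hj hrr
  rw [hKj] at he
  exact hne (by rw [← hjf, he])
end

section
/- Let E be a directed graph in which no entry to a cycle is in a cycle. If η is a finite path of non-zero length with r(η) = s(η), then there exist a cycle α in E and p ≥ 1 such that η = α^p (the concatenation of p copies of α). -/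
/-- A finite path of non-zero length in the directed graph `G` (0-indexed edges, with
junk values of `edge` beyond `len`). -/
structure FinPath (G : DGraph) where
  len : ℕ
  len_pos : 0 < len
  edge : ℕ → G.E
  compat : ∀ i, i + 1 < len → G.s (edge i) = G.r (edge (i + 1))

/-- Every closed walk contains a cycle through its first edge. -/
private lemma cycle_through (G : DGraph) :
    ∀ n, ∀ f : ℕ → G.E, 0 < n →
      (∀ i, i + 1 < n → G.s (f i) = G.r (f (i + 1))) →
      G.s (f (n - 1)) = G.r (f 0) →
      ∃ c : DCycle G, ∃ k, k < c.len ∧ c.edge k = f 0 := by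
  intro n
  induction n using Nat.strong_induction_on with
  | _ n ih =>
    intro f hn hcomp hclosed
    by_cases hdist : ∀ i j, i < n → j < n → G.s (f i) = G.s (f j) → i = j
    · exact ⟨⟨n, hn, f, hcomp, hclosed, hdist⟩, 0, hn, rfl⟩
    · push_neg at hdist
      obtain ⟨i, j, hi, hj, hs, hne⟩ := hdist
      have main : ∀ a b, a < b → b < n → G.s (f a) = G.s (f b) →
          ∃ c : DCycle G, ∃ k, k < c.len ∧ c.edge k = f 0 := by
        intro a b hab hbn hsab
        set m := n - (b - a) with hm
        set g : ℕ → G.E := fun i => if i ≤ a then f i else f (i + (b - a)) with hg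
        have hm1 : 0 < m := by omega
        have hmn : m < n := by omega
        have hg0 : g 0 = f 0 := by simp [hg]
        have gcomp : ∀ i, i + 1 < m → G.s (g i) = G.r (g (i + 1)) := by
          intro i him
          by_cases h1 : i + 1 ≤ a
          · simp only [hg, if_pos h1, if_pos (Nat.le_of_succ_le h1)]
            exact hcomp i (by omega)
          · by_cases h2 : i ≤ a
            · have hia : i = a := by omega
              subst hia
              simp only [hg, if_pos le_rfl, if_neg h1]
              have : i + 1 + (b - i) = b + 1 := by omega
              rw [this, hsab]
              exact hcomp b (by omega)
            · simp only [hg, if_neg h2, if_neg (by omega : ¬ i + 1 ≤ a)]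
              have : i + 1 + (b - a) = i + (b - a) + 1 := by omega
              rw [this]
              exact hcomp (i + (b - a)) (by omega)
        have gclosed : G.s (g (m - 1)) = G.r (g 0) := by
          rw [hg0]
          by_cases hb : b + 1 = n
          · have hma : m - 1 = a := by omega
            simp only [hg, hma, if_pos le_rfl]
            rw [hsab]
            have : b = n - 1 := by omega
            rw [this]; exact hclosed
          · have hma : ¬ (m - 1 ≤ a) := by omega
            simp only [hg, if_neg hma]
            have : m - 1 + (b - a) = n - 1 := by omega
            rw [this]; exact hclosed
        obtain ⟨c, k, hk, hke⟩ := ih m hmn g hm1 gcomp gclosed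
        exact ⟨c, k, hk, hke.trans hg0⟩
      rcases hne.lt_or_gt with hab | hab
      · exact main i j hab hj hs
      · exact main j i hab hi hs.symm

/-- Let `E` be a directed graph in which no entry to a cycle is in a cycle.  If `η` is
a finite path of non-zero length with `r(η) = s(η)`, then `η = α^p` for some cycle
`α` in `E` and some `p ≥ 1`. -/
theorem stmt16 (G : DGraph)
    (h : ∀ c : DCycle G, ∀ f : G.E, c.IsEntry f → ∀ c' : DCycle G, ¬ c'.EdgeMem f)
    (η : FinPath G) (hclosed : G.r (η.edge 0) = G.s (η.edge (η.len - 1))) :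
    ∃ c : DCycle G, ∃ p : ℕ, 1 ≤ p ∧ η.len = p * c.len ∧
      ∀ i, i < η.len → η.edge i = c.edge (i % c.len) := by
  set L := η.len with hLdef
  have hL0 : 0 < L := η.len_pos
  set e : ℕ → G.E := fun i => η.edge (i % L) with he
  have hper : ∀ i, e (i + L) = e i := by
    intro i; simp [he, Nat.add_mod_right]
  have hcomp : ∀ i, G.s (e i) = G.r (e (i + 1)) := by
    intro i
    have h1 : i % L < L := Nat.mod_lt _ hL0
    have hrw : i + 1 = (i % L + 1) + L * (i / L) := by
      have := Nat.div_add_mod i L; omega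
    by_cases h2 : i % L + 1 < L
    · have : (i + 1) % L = i % L + 1 := by
        rw [hrw, Nat.add_mul_mod_self_left, Nat.mod_eq_of_lt h2]
      simp only [he, this]
      exact η.compat (i % L) h2
    · have hiL : i % L = L - 1 := by omega
      have : (i + 1) % L = 0 := by
        rw [hrw, Nat.add_mul_mod_self_left]
        have : i % L + 1 = L := by omega
        rw [this, Nat.mod_self]
      simp only [he, this, hiL]
      exact hclosed.symm
  classical
  set v : ℕ → G.V := fun i => G.r (e i) with hv
  -- key: equal vertices give equal edges
  have key : ∀ i j, v i = v j → e i = e j := by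
    intro i j hvij
    by_contra hne
    have mk : ∀ a : ℕ, ∃ c : DCycle G, ∃ k, k < c.len ∧ c.edge k = e a := by
      intro a
      apply cycle_through G L (fun k => e (a + k)) hL0
        (fun i _ => hcomp (a + i))
      have h1 : a + (L - 1) + 1 = a + L := by omega
      calc G.s (e (a + (L - 1))) = G.r (e (a + (L - 1) + 1)) := hcomp _
        _ = G.r (e (a + 0)) := by rw [h1, hper a, Nat.add_zero]
    obtain ⟨c1, k1, hk1, hke1⟩ := mk i
    obtain ⟨c2, k2, hk2, hke2⟩ := mk j
    have hentry : c2.IsEntry (e i) := by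
      refine ⟨k2, hk2, ?_, ?_⟩
      · rw [hke2]; exact hvij
      · rw [hke2]; exact hne
    exact h c2 (e i) hentry c1 ⟨k1, hk1, hke1⟩
  -- propagation
  have hprop : ∀ i j, v i = v j → ∀ k, v (i + k) = v (j + k) := by
    intro i j hvij k
    induction k with
    | zero => exact hvij
    | succ k ihk =>
      have heq := key _ _ ihk
      have : G.r (e (i + k + 1)) = G.r (e (j + k + 1)) := by
        rw [← hcomp (i + k), ← hcomp (j + k), heq]
      exact this
  have heqk : ∀ i j, v i = v j → ∀ k, e (i + k) = e (j + k) :=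
    fun i j hvij k => key _ _ (hprop i j hvij k)
  have hvL : v L = v 0 := by
    have h0 := hper 0
    rw [Nat.zero_add] at h0
    show G.r (e L) = G.r (e 0)
    rw [h0]
  have hex : ∃ m, 0 < m ∧ v m = v 0 := ⟨L, hL0, hvL⟩
  set d := Nat.find hex with hd
  obtain ⟨hd0, hvd⟩ : 0 < d ∧ v d = v 0 := Nat.find_spec hex
  have hmin : ∀ m, m < d → ¬(0 < m ∧ v m = v 0) := fun m hm => Nat.find_min hex hm
  have hdL : d ≤ L := Nat.find_min' hex ⟨hL0, hvL⟩
  have hvper : ∀ k, v (k + d) = v k := by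
    intro k
    have h0 := hprop d 0 hvd k
    rw [Nat.add_comm d k, Nat.zero_add] at h0
    exact h0
  have heper : ∀ k, e (k + d) = e k := fun k => key _ _ (hvper k)
  have hvmul : ∀ q r, v (q * d + r) = v r := by
    intro q r
    induction q with
    | zero => simp
    | succ q ihq =>
      have : (q + 1) * d + r = (q * d + r) + d := by ring
      rw [this, hvper]; exact ihq
  have hemul : ∀ q r, e (q * d + r) = e r := fun q r => key _ _ (hvmul q r)
  have hdvd : L % d = 0 := by
    by_contra hne0
    have h1 : L % d < d := Nat.mod_lt _ hd0
    have h2 : L / d * d + L % d = L := by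
      have := Nat.div_add_mod' L d; omega
    have : v (L % d) = v 0 := by
      rw [← hvmul (L / d) (L % d), h2, hvL]
    exact hmin (L % d) h1 ⟨Nat.pos_of_ne_zero hne0, this⟩
  have hdist : ∀ i j, i < d → j < d → G.s (e i) = G.s (e j) → i = j := by
    have main : ∀ i j, i < j → j < d → G.s (e i) = G.s (e j) → False := by
      intro i j hij hjd hs
      have hvij : v (i + 1) = v (j + 1) := by
        show G.r (e (i + 1)) = G.r (e (j + 1))
        rw [← hcomp i, ← hcomp j]; exact hs
      have := hprop (i + 1) (j + 1) hvij (d - (j + 1))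
      have h1 : j + 1 + (d - (j + 1)) = d := by omega
      have h2 : i + 1 + (d - (j + 1)) = d - (j - i) := by omega
      rw [h1, h2, hvd] at this
      exact hmin (d - (j - i)) (by omega) ⟨by omega, this⟩
    intro i j hi hj hs
    rcases lt_trichotomy i j with hij | hij | hij
    · exact (main i j hij hj hs).elim
    · exact hij
    · exact (main j i hij hi hs.symm).elim
  have hcclosed : G.s (e (d - 1)) = G.r (e 0) := by
    have h1 : d - 1 + 1 = d := by omega
    calc G.s (e (d - 1)) = G.r (e (d - 1 + 1)) := hcomp _
      _ = G.r (e 0) := by rw [h1]; exact hvd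
  refine ⟨⟨d, hd0, e, fun i _ => hcomp i, hcclosed, hdist⟩, L / d, ?_, ?_, ?_⟩
  · have : 0 < L / d := Nat.div_pos hdL hd0
    omega
  · show L = L / d * d
    have := Nat.div_add_mod' L d; omega
  · intro i hiL
    show η.edge i = e (i % d)
    have h1 : i / d * d + i % d = i := by
      have := Nat.div_add_mod' i d; omega
    have h2 : e i = e (i % d) := by rw [← hemul (i / d) (i % d), h1]
    rw [← h2]
    show η.edge i = η.edge (i % L)
    rw [Nat.mod_eq_of_lt hiL]
end
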